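/- arXiv:math/0603691 — 10 statements merged into one kernel-verified Lean document; each statement's English description precedes it below -/
import Mathlib

section
/- If X ⊆ ω^ω is not Laver-null, then there exists a continuous surjection from X onto Cantor space 2^ω. -/
def LaverBranches (T : Set (List ℕ)) : Set (ℕ → ℕ) :=
  {x | ∀ n : ℕ, (List.range n).map x ∈ T}

def IsLaverTree (T : Set (List ℕ)) : Prop :=
  (∀ t ∈ T, ∀ s : List ℕ, s <+: t → s ∈ T) ∧
  ∃ s ∈ T, ∀ t ∈ T, s <+: t → {n : ℕ | t ++ [n] ∈ T}.Infinite

/-- `X` is Laver-null: every Laver tree has a Laver subtree whose branches avoid `X`. -/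
def IsLaverNull (X : Set (ℕ → ℕ)) : Prop :=
  ∀ T : Set (List ℕ), IsLaverTree T →
    ∃ T' ⊆ T, IsLaverTree T' ∧ LaverBranches T' ∩ X = ∅

open Classical

/-- In an infinite subset of ℕ, the elements whose "index" (count of earlier elements)
has a prescribed parity form an infinite set. -/
lemma parity_infinite (p : ℕ → Prop) (hp : {k | p k}.Infinite) (c : Bool) :
    {k | p k ∧ decide (Nat.count p k % 2 = 1) = c}.Infinite := by
  apply Set.infinite_of_injective_forall_mem
    (f := fun i : ℕ => Nat.nth p (2 * i + cond c 1 0))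
  · intro i j hij
    have := Nat.nth_injective hp hij
    omega
  · intro i
    refine ⟨Nat.nth_mem_of_infinite hp _, ?_⟩
    rw [Nat.count_nth_of_infinite hp]
    cases c <;> (simp; try omega)

theorem stmt1 (X : Set (ℕ → ℕ)) (h : ¬ IsLaverNull X) :
    ∃ f : X → (ℕ → Bool), Continuous f ∧ Function.Surjective f := by
  rw [IsLaverNull] at h
  push_neg at h
  obtain ⟨T, hT, hbig⟩ := h
  obtain ⟨hcl, s, hsT, hstem⟩ := hT
  set ℓ := s.length with hℓ
  -- the continuous map
  set F : (ℕ → ℕ) → ℕ → Bool := fun x n =>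
    decide (Nat.count (fun k => ((List.range (ℓ + n)).map x) ++ [k] ∈ T) (x (ℓ + n)) % 2 = 1)
    with hF
  refine ⟨fun x => F x.1, ?_, ?_⟩
  · -- continuity
    apply continuous_pi
    intro n
    have key : ∀ x : X, F x.1 n =
        (fun v : Fin (ℓ + n + 1) → ℕ =>
          F (fun i => if h : i < ℓ + n + 1 then v ⟨i, h⟩ else 0) n)
        (fun i : Fin (ℓ + n + 1) => x.1 i) := by
      intro x
      have h1 : List.map (fun i => if h : i < ℓ + n + 1 then x.1 i else 0)
          (List.range (ℓ + n)) = List.map x.1 (List.range (ℓ + n)) := by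
        apply List.map_congr_left
        intro a ha
        rw [List.mem_range] at ha
        exact dif_pos (by omega)
      have h2 : (if h : ℓ + n < ℓ + n + 1 then x.1 (ℓ + n) else 0) = x.1 (ℓ + n) :=
        dif_pos (by omega)
      simp only [hF, h1, h2]
    simp only [key]
    have hcont : Continuous fun x : X => (fun i : Fin (ℓ + n + 1) => x.1 (i : ℕ)) :=
      continuous_pi fun i => (continuous_apply (i : ℕ)).comp continuous_subtype_val
    exact Continuous.comp (g := fun v : Fin (ℓ + n + 1) → ℕ =>
      F (fun i => if h : i < ℓ + n + 1 then v ⟨i, h⟩ else 0) n)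
      continuous_of_discreteTopology hcont
  · -- surjectivity
    intro b
    set U : Set (List ℕ) := {t | t ∈ T ∧ (s <+: t ∨ t <+: s) ∧
      ∀ u k, u ++ [k] <+: t → ℓ ≤ u.length →
        decide (Nat.count (fun j => u ++ [j] ∈ T) k % 2 = 1) = b (u.length - ℓ)} with hU
    have hUsub : U ⊆ T := fun t ht => ht.1
    have hUcl : ∀ t ∈ U, ∀ v : List ℕ, v <+: t → v ∈ U := by
      intro t ht v hv
      refine ⟨hcl t ht.1 v hv, ?_, fun u k hpre hlen => ht.2.2 u k (hpre.trans hv) hlen⟩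
      rcases ht.2.1 with hst | hts
      · exact List.prefix_or_prefix_of_prefix hst hv
      · exact Or.inr (hv.trans hts)
    have hsU : s ∈ U := by
      refine ⟨hsT, Or.inl List.prefix_rfl, fun u k hpre hlen => absurd hpre.length_le ?_⟩
      simp only [List.length_append, List.length_singleton]
      omega
    have hUsplit : ∀ t ∈ U, s <+: t → {k | t ++ [k] ∈ U}.Infinite := by
      intro t ht hst
      have hinf := hstem t ht.1 hst
      have hlt : ℓ ≤ t.length := hst.length_le
      apply ((parity_infinite _ hinf (b (t.length - ℓ)))).mono
      intro k hk
      refine ⟨hk.1, Or.inl (hst.trans (t.prefix_append [k])), ?_⟩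
      intro u k' hpre hlen
      rcases List.prefix_concat_iff.1 hpre with heq | hpre'
      · obtain ⟨hu, hk'⟩ := List.append_inj' heq rfl
        obtain rfl := hu
        obtain rfl : k' = k := by simpa using hk'
        exact hk.2
      · exact ht.2.2 u k' hpre' hlen
    have hUlaver : IsLaverTree U := ⟨fun t ht v hv => hUcl t ht v hv, s, hsU, hUsplit⟩
    obtain ⟨x, hxU, hxX⟩ := hbig U hUsub hUlaver
    refine ⟨⟨x, hxX⟩, funext fun n => ?_⟩
    have ht : (List.range (ℓ + n + 1)).map x ∈ U := hxU (ℓ + n + 1)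
    have hsplit : (List.range (ℓ + n + 1)).map x =
        ((List.range (ℓ + n)).map x) ++ [x (ℓ + n)] := by
      rw [List.range_succ, List.map_append]; rfl
    have := ht.2.2 ((List.range (ℓ + n)).map x) (x (ℓ + n))
      (by rw [← hsplit]) (by simp)
    simpa [hF] using this
end

section
/- Every σ-set X ⊆ ω^ω is Laver-null: for every Laver tree T there is a Laver subtree T′ ⊆ T whose set of branches is disjoint from X. -/
/-- `X` is a σ-set: every relative `G_δ` subset of `X` is a relative `F_σ` subset of `X`. -/
def IsSigmaSet (X : Set (ℕ → ℕ)) : Prop :=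
  ∀ G : Set (ℕ → ℕ), IsGδ G →
    ∃ C : ℕ → Set (ℕ → ℕ), (∀ n, IsClosed (C n)) ∧ X ∩ G = X ∩ ⋃ n, C n

/-!
Split the successors of every node of `T` into two infinite halves, the `E`-moves and the
`N`-moves, and let `G` be the set of sequences making infinitely many `E`-moves. `G` is `G_δ`, so
`X ∩ G = X ∩ ⋃ m, C m` with `C m` closed, and it suffices to find a Laver subtree all of whose
branches lie in `G ∆ ⋃ m, C m`.

Call a node escapable from `C m` if the `N`-moves can be forced out of `C m` even when,
at every node, finitely many of them are forbidden; this is a least fixed point, hence carries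
an ordinal rank. If some node of `T` meeting `C m` is not escapable, staying among such nodes
with `N`-moves gives a subtree with branches in `C m \ G`. Otherwise a fusion leaves
`C 0, C 1, …` in turn by rank-descending `N`-moves, inserting an `E`-move after each escape,
and its branches lie in `G \ ⋃ m, C m`.
-/

open Set Filter Classical

def seqPrefix (x : ℕ → ℕ) (n : ℕ) : List ℕ := (List.range n).map x

infixl:90 " ↾ " => seqPrefix

@[simp] theorem length_seqPrefix (x : ℕ → ℕ) (n : ℕ) : (x ↾ n).length = n := by
  simp [seqPrefix]

theorem seqPrefix_succ (x : ℕ → ℕ) (n : ℕ) : x ↾ (n + 1) = x ↾ n ++ [x n] := by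
  simp [seqPrefix, List.range_succ]

theorem seqPrefix_eq_seqPrefix_iff {x y : ℕ → ℕ} {n : ℕ} :
    y ↾ n = x ↾ n ↔ ∀ i < n, y i = x i := by
  simp [seqPrefix, List.map_inj_left]

theorem isLocallyConstant_seqPrefix (n : ℕ) : IsLocallyConstant fun x : ℕ → ℕ => x ↾ n := by
  induction n with
  | zero => exact IsLocallyConstant.const []
  | succ n ih =>
    simp only [seqPrefix_succ]
    exact ih.comp₂ ((IsLocallyConstant.iff_continuous _).2 (continuous_apply n))
      fun t v => t ++ [v]

theorem isGδ_setOf_frequently (E : List ℕ → Set ℕ) :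
    IsGδ {x : ℕ → ℕ | ∃ᶠ n in atTop, x n ∈ E (x ↾ n)} := by
  have hopen : ∀ n, IsOpen {x : ℕ → ℕ | x n ∈ E (x ↾ n)} := fun n =>
    ((isLocallyConstant_seqPrefix n).prodMk
      ((IsLocallyConstant.iff_continuous _).2 (continuous_apply n))) {p | p.2 ∈ E p.1}
  have : {x : ℕ → ℕ | ∃ᶠ n in atTop, x n ∈ E (x ↾ n)} =
      ⋂ N, ⋃ n ≥ N, {x | x n ∈ E (x ↾ n)} := by
    ext x; simp [frequently_atTop]
  rw [this]
  exact .iInter_of_isOpen fun N => isOpen_biUnion fun n _ => hopen n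

theorem IsClosed.mem_of_frequently_seqPrefix {C : Set (ℕ → ℕ)} (hC : IsClosed C) {x : ℕ → ℕ}
    (h : ∃ᶠ n in atTop, ∃ y ∈ C, y ↾ n = x ↾ n) : x ∈ C := by
  refine hC.closure_subset ((PiNat.isTopologicalBasis_cylinders _).mem_closure_iff.2 ?_)
  rintro _ ⟨z, n, rfl⟩ hxz
  obtain ⟨k, ⟨y, hyC, hyx⟩, hnk⟩ := (h.and_eventually (eventually_ge_atTop n)).exists
  refine ⟨y, PiNat.mem_cylinder_iff.2 fun i hi => ?_, hyC⟩
  rw [seqPrefix_eq_seqPrefix_iff.1 hyx i (by omega), PiNat.mem_cylinder_iff.1 hxz i hi]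

theorem Set.Infinite.exists_infinite_diff {α : Type*} {s : Set α} (hs : s.Infinite) :
    ∃ a ⊆ s, a.Infinite ∧ (s \ a).Infinite := by
  set f := hs.natEmbedding
  have hf : Function.Injective fun k => (f k : α) := Subtype.val_injective.comp f.injective
  refine ⟨range fun k => (f (2 * k) : α), range_subset_iff.2 fun k => (f _).2,
    infinite_range_of_injective (hf.comp fun a b h => by simpa using h), ?_⟩
  refine infinite_of_injective_forall_mem (f := fun k => (f (2 * k + 1) : α))
    (hf.comp fun a b h => by simpa using h) fun k => ⟨(f _).2, ?_⟩
  rintro ⟨j, hj⟩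
  have := hf hj
  omega

inductive RuleTree (s : List ℕ) (R : List ℕ → Set ℕ) : List ℕ → Prop
  | stem : RuleTree s R s
  | step {t : List ℕ} {v : ℕ} : RuleTree s R t → v ∈ R t → RuleTree s R (t ++ [v])

namespace RuleTree

variable {s : List ℕ} {R : List ℕ → Set ℕ}

theorem stem_prefix {t : List ℕ} (ht : RuleTree s R t) : s <+: t := by
  induction ht with
  | stem => exact List.prefix_refl s
  | step _ _ ih => exact ih.trans (List.prefix_append _ _)

theorem of_prefix {r t : List ℕ} (hr : RuleTree s R r) (htr : t <+: r) (hst : s <+: t) :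
    RuleTree s R t := by
  induction hr with
  | stem =>
    obtain rfl := hst.eq_of_length (hst.length_le.antisymm htr.length_le)
    exact .stem
  | step hr hv ih =>
    rcases List.prefix_concat_iff.1 htr with rfl | htr
    · exact hr.step hv
    · exact ih htr

theorem mem_of_append {t : List ℕ} {v : ℕ} (h : RuleTree s R (t ++ [v]))
    (hs : s.length ≤ t.length) : v ∈ R t := by
  generalize hw : t ++ [v] = w at h
  cases h with
  | stem =>
    have := congrArg List.length hw
    simp only [List.length_append, List.length_singleton] at this
    omega
  | step _ hv =>
    obtain ⟨rfl, h⟩ := List.append_inj' hw rfl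
    simp only [List.cons.injEq, and_true] at h
    exact h ▸ hv

end RuleTree

theorem exists_laverSubtree_of_rule {T : Set (List ℕ)} (hT : ∀ t ∈ T, ∀ r, r <+: t → r ∈ T)
    {s : List ℕ} (R : List ℕ → Set ℕ) (P : List ℕ → Prop) (hs : P s)
    (hPT : ∀ t, P t → t ∈ T) (hstep : ∀ t, P t → ∀ v ∈ R t, P (t ++ [v]))
    (hinf : ∀ t, P t → (R t).Infinite) :
    ∃ T' ⊆ T, IsLaverTree T' ∧
      ∀ x ∈ LaverBranches T', ∀ n ≥ s.length, P (x ↾ n) ∧ x n ∈ R (x ↾ n) := by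
  have hP : ∀ {t}, RuleTree s R t → P t := fun ht => by
    induction ht with
    | stem => exact hs
    | step _ hv ih => exact hstep _ ih _ hv
  have hbranch : ∀ x ∈ LaverBranches {t | ∃ r, RuleTree s R r ∧ t <+: r}, ∀ n ≥ s.length,
      RuleTree s R (x ↾ n) := by
    intro x hx n hn
    obtain ⟨r, hr, hxr⟩ := hx n
    exact hr.of_prefix hxr (List.prefix_of_prefix_length_le hr.stem_prefix hxr (by simpa))
  refine ⟨{t | ∃ r, RuleTree s R r ∧ t <+: r}, ?_, ⟨?_, s, ⟨s, .stem, List.prefix_refl s⟩, ?_⟩, ?_⟩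
  · rintro t ⟨r, hr, htr⟩
    exact hT r (hPT r (hP hr)) t htr
  · rintro t ⟨r, hr, htr⟩ t' ht'
    exact ⟨r, hr, ht'.trans htr⟩
  · rintro t ⟨r, hr, htr⟩ hst
    have ht := hr.of_prefix htr hst
    exact (hinf t (hP ht)).mono fun v hv => ⟨_, ht.step hv, List.prefix_refl _⟩
  · intro x hx n hn
    have hsucc := hbranch x hx (n + 1) (by omega)
    rw [seqPrefix_succ] at hsucc
    exact ⟨hP (hbranch x hx n hn), hsucc.mem_of_append (by simpa)⟩

section Escape

open OrdinalApprox

variable (U₀ : Set (List ℕ)) (N : List ℕ → Set ℕ)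

def escapeOp : Set (List ℕ) →o Set (List ℕ) where
  toFun S := {t | {v ∈ N t | t ++ [v] ∈ U₀ \ S}.Finite}
  monotone' _ _ hS _ ht := ht.subset fun _ ⟨hv, hU, hnS⟩ => ⟨hv, hU, fun h => hnS (hS h)⟩

/-- The nodes from which the `N`-moves can be forced out of `U₀` when, at each node, the
opponent may forbid finitely many moves; `escapeRank` measures how long this takes. -/
def Escapable : Set (List ℕ) := (escapeOp U₀ N).lfp

noncomputable def escapeRank (t : List ℕ) : Ordinal.{0} :=
  sInf {a | t ∈ lfpApprox (escapeOp U₀ N) ⊥ a}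

noncomputable def descendingMoves (t : List ℕ) : Set ℕ :=
  {v ∈ N t | t ++ [v] ∈ U₀ → escapeRank U₀ N (t ++ [v]) < escapeRank U₀ N t}

variable {U₀ N} {t : List ℕ}

theorem infinite_of_not_mem_escapable (ht : t ∉ Escapable U₀ N) :
    {v ∈ N t | t ++ [v] ∈ U₀ \ Escapable U₀ N}.Infinite := by
  rw [Escapable, ← OrderHom.map_lfp] at ht
  exact ht

theorem escapeRank_le {a : Ordinal} (ht : t ∈ lfpApprox (escapeOp U₀ N) ⊥ a) :
    escapeRank U₀ N t ≤ a :=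
  csInf_le' ht

theorem mem_lfpApprox_escapeRank (ht : t ∈ Escapable U₀ N) :
    t ∈ lfpApprox (escapeOp U₀ N) ⊥ (escapeRank U₀ N t) := by
  rw [Escapable, ← lfpApprox_ord_eq_lfp] at ht
  exact csInf_mem (s := {a | t ∈ lfpApprox (escapeOp U₀ N) ⊥ a}) ⟨_, ht⟩

theorem infinite_descendingMoves (ht : t ∈ Escapable U₀ N) (hN : (N t).Infinite) :
    (descendingMoves U₀ N t).Infinite := by
  have hmem := mem_lfpApprox_escapeRank ht
  rw [lfpApprox] at hmem
  simp only [bot_sup_eq, iSup_eq_iUnion, mem_iUnion] at hmem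
  obtain ⟨b, hb, hfin⟩ := hmem
  refine (hN.sdiff hfin).mono fun v hv => ⟨hv.1, fun hU => ?_⟩
  by_contra hle
  exact hv.2 ⟨hv.1, hU, fun hvb => hle ((escapeRank_le hvb).trans_lt hb)⟩

end Escape

/-- The number of the sets `U 0, U 1, …` that the path to `t` has left so far, the sets being
left one at a time and in order. -/
noncomputable def escapeCount (U : ℕ → Set (List ℕ)) (t : List ℕ) : ℕ :=
  t.reverseRecOn 0 fun r _ m => if r ∈ U m then m else m + 1

noncomputable def fusionRule (U : ℕ → Set (List ℕ)) (E N : List ℕ → Set ℕ) (t : List ℕ) :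
    Set ℕ :=
  if t ∈ U (escapeCount U t) then descendingMoves (U (escapeCount U t)) N t else E t

section Fusion

variable {U : ℕ → Set (List ℕ)} {E N : List ℕ → Set ℕ}

theorem escapeCount_nil : escapeCount U [] = 0 := by
  rw [escapeCount, List.reverseRecOn_nil]

theorem escapeCount_append_singleton (t : List ℕ) (v : ℕ) :
    escapeCount U (t ++ [v]) =
      if t ∈ U (escapeCount U t) then escapeCount U t else escapeCount U t + 1 := by
  rw [escapeCount, List.reverseRecOn_concat, ← escapeCount]

theorem escapeCount_seqPrefix_succ (x : ℕ → ℕ) (n : ℕ) :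
    escapeCount U (x ↾ (n + 1)) =
      if x ↾ n ∈ U (escapeCount U (x ↾ n)) then escapeCount U (x ↾ n)
      else escapeCount U (x ↾ n) + 1 := by
  rw [seqPrefix_succ, escapeCount_append_singleton]

variable {x : ℕ → ℕ} {k : ℕ}

theorem frequently_seqPrefix_not_mem (hx : ∀ n ≥ k, x n ∈ fusionRule U E N (x ↾ n)) :
    ∃ᶠ n in atTop, x ↾ n ∉ U (escapeCount U (x ↾ n)) := by
  by_contra h
  simp only [not_frequently, not_not] at h
  obtain ⟨n₀, hn₀⟩ := eventually_atTop.1 (h.and (eventually_ge_atTop k))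
  set m := escapeCount U (x ↾ n₀)
  have hcount : ∀ i, escapeCount U (x ↾ (n₀ + i)) = m := by
    intro i
    induction i with
    | zero => rfl
    | succ i ih => rw [← add_assoc, escapeCount_seqPrefix_succ, if_pos (hn₀ _ (by omega)).1, ih]
  refine not_strictAnti_of_wellFoundedLT (fun i => escapeRank (U m) N (x ↾ (n₀ + i)))
    (strictAnti_nat_of_succ_lt fun i => ?_)
  have hin := (hn₀ (n₀ + i + 1) (by omega)).1
  have hmove := hx (n₀ + i) (hn₀ (n₀ + i) (by omega)).2
  rw [fusionRule, if_pos (hn₀ _ (by omega)).1, hcount] at hmove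
  rw [escapeCount_seqPrefix_succ, if_pos (hn₀ _ (by omega)).1, hcount, seqPrefix_succ] at hin
  simpa only [← add_assoc, seqPrefix_succ] using hmove.2 hin

theorem frequently_mem_of_fusionRule (hx : ∀ n ≥ k, x n ∈ fusionRule U E N (x ↾ n)) :
    ∃ᶠ n in atTop, x n ∈ E (x ↾ n) :=
  ((frequently_seqPrefix_not_mem hx).and_eventually (eventually_ge_atTop k)).mono
    fun n ⟨hout, hn⟩ => by simpa [fusionRule, hout] using hx n hn

theorem exists_seqPrefix_not_mem_of_escapeCount_eq
    (hx : ∀ n ≥ k, x n ∈ fusionRule U E N (x ↾ n)) {n m : ℕ} (hn : escapeCount U (x ↾ n) = m) :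
    ∃ n', escapeCount U (x ↾ n') = m ∧ x ↾ n' ∉ U m := by
  by_contra! h
  have hcount : ∀ i, escapeCount U (x ↾ (n + i)) = m := by
    intro i
    induction i with
    | zero => exact hn
    | succ i ih => rw [← add_assoc, escapeCount_seqPrefix_succ, ih, if_pos (h _ ih)]
  obtain ⟨n', hout, hn'⟩ :=
    ((frequently_seqPrefix_not_mem hx).and_eventually (eventually_ge_atTop n)).exists
  obtain ⟨i, rfl⟩ := Nat.exists_eq_add_of_le hn'
  exact hout (hcount i ▸ h _ (hcount i))

theorem exists_seqPrefix_not_mem (hx : ∀ n ≥ k, x n ∈ fusionRule U E N (x ↾ n)) (m : ℕ) :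
    ∃ n, x ↾ n ∉ U m := by
  suffices ∀ m, ∃ n, escapeCount U (x ↾ n) = m by
    obtain ⟨n, hn⟩ := this m
    obtain ⟨n', -, hout⟩ := exists_seqPrefix_not_mem_of_escapeCount_eq hx hn
    exact ⟨n', hout⟩
  intro m
  induction m with
  | zero => exact ⟨0, escapeCount_nil⟩
  | succ m ih =>
    obtain ⟨n, hn⟩ := ih
    obtain ⟨n', hn', hout⟩ := exists_seqPrefix_not_mem_of_escapeCount_eq hx hn
    exact ⟨n' + 1, by rw [escapeCount_seqPrefix_succ, hn', if_neg hout]⟩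

end Fusion

section LaverSubtrees

variable {T : Set (List ℕ)}

theorem exists_laverSubtree_of_not_mem_escapable {U₀ : Set (List ℕ)} {N : List ℕ → Set ℕ}
    (hT : ∀ t ∈ T, ∀ r, r <+: t → r ∈ T) (hN : ∀ t, N t ⊆ {v | t ++ [v] ∈ T}) {u : List ℕ}
    (hu : u ∈ T) (huU : u ∈ U₀) (hesc : u ∉ Escapable U₀ N) :
    ∃ T' ⊆ T, IsLaverTree T' ∧
      ∀ x ∈ LaverBranches T', ∀ n ≥ u.length, x ↾ n ∈ U₀ ∧ x n ∈ N (x ↾ n) := by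
  obtain ⟨T', hT'T, hT', hbr⟩ := exists_laverSubtree_of_rule hT
    (fun t => {v ∈ N t | t ++ [v] ∈ U₀ \ Escapable U₀ N})
    (fun t => t ∈ T ∧ t ∈ U₀ ∧ t ∉ Escapable U₀ N) ⟨hu, huU, hesc⟩ (fun _ ht => ht.1)
    (fun t _ v hv => ⟨hN t hv.1, hv.2⟩) fun _ ht => infinite_of_not_mem_escapable ht.2.2
  exact ⟨T', hT'T, hT', fun x hx n hn => ⟨(hbr x hx n hn).1.2.1, (hbr x hx n hn).2.1⟩⟩

theorem exists_laverSubtree_escaping {E N : List ℕ → Set ℕ}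
    (hT : ∀ t ∈ T, ∀ r, r <+: t → r ∈ T) (hE : ∀ t, E t ⊆ {v | t ++ [v] ∈ T})
    (hN : ∀ t, N t ⊆ {v | t ++ [v] ∈ T}) {s : List ℕ} (hs : s ∈ T)
    (hinf : ∀ t ∈ T, s <+: t → (E t).Infinite ∧ (N t).Infinite) (U : ℕ → Set (List ℕ))
    (hesc : ∀ m, ∀ t ∈ T, t ∈ U m → t ∈ Escapable (U m) N) :
    ∃ T' ⊆ T, IsLaverTree T' ∧ ∀ x ∈ LaverBranches T',
      (∃ᶠ n in atTop, x n ∈ E (x ↾ n)) ∧ ∀ m, ∃ n, x ↾ n ∉ U m := by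
  have hstep : ∀ t, t ∈ T ∧ s <+: t → ∀ v ∈ fusionRule U E N t, t ++ [v] ∈ T ∧ s <+: t ++ [v] := by
    rintro t ⟨ht, hst⟩ v hv
    refine ⟨?_, hst.trans (List.prefix_append _ _)⟩
    unfold fusionRule at hv
    split_ifs at hv
    · exact hN t hv.1
    · exact hE t hv
  have hrule_inf : ∀ t, t ∈ T ∧ s <+: t → (fusionRule U E N t).Infinite := by
    rintro t ⟨ht, hst⟩
    unfold fusionRule
    split_ifs with hU
    · exact infinite_descendingMoves (hesc _ t ht hU) (hinf t ht hst).2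
    · exact (hinf t ht hst).1
  obtain ⟨T', hT'T, hT', hbr⟩ := exists_laverSubtree_of_rule hT (fusionRule U E N)
    (fun t => t ∈ T ∧ s <+: t) ⟨hs, List.prefix_refl s⟩ (fun _ ht => ht.1) hstep hrule_inf
  refine ⟨T', hT'T, hT', fun x hx => ?_⟩
  have hrule : ∀ n ≥ s.length, x n ∈ fusionRule U E N (x ↾ n) := fun n hn => (hbr x hx n hn).2
  exact ⟨frequently_mem_of_fusionRule hrule, exists_seqPrefix_not_mem hrule⟩

end LaverSubtrees

theorem IsLaverTree.exists_isGδ_forall_laverSubtree_symmDiff {T : Set (List ℕ)}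
    (hT : IsLaverTree T) :
    ∃ G : Set (ℕ → ℕ), IsGδ G ∧ ∀ C : ℕ → Set (ℕ → ℕ), (∀ m, IsClosed (C m)) →
      ∃ T' ⊆ T, IsLaverTree T' ∧ LaverBranches T' ⊆ symmDiff G (⋃ m, C m) := by
  obtain ⟨hpc, s, hs, hsucc⟩ := hT
  have hsplit : ∀ t, ∃ E ⊆ {v | t ++ [v] ∈ T},
      {v | t ++ [v] ∈ T}.Infinite → E.Infinite ∧ ({v | t ++ [v] ∈ T} \ E).Infinite := by
    intro t
    by_cases h : {v | t ++ [v] ∈ T}.Infinite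
    · obtain ⟨E, hE, hEinf, hdiff⟩ := h.exists_infinite_diff
      exact ⟨E, hE, fun _ => ⟨hEinf, hdiff⟩⟩
    · exact ⟨∅, empty_subset _, fun h' => absurd h' h⟩
  choose E hEsub hEinf using hsplit
  set N : List ℕ → Set ℕ := fun t => {v | t ++ [v] ∈ T} \ E t
  refine ⟨{x | ∃ᶠ n in atTop, x n ∈ E (x ↾ n)}, isGδ_setOf_frequently E, fun C hC => ?_⟩
  set U : ℕ → Set (List ℕ) := fun m => {t | ∃ y ∈ C m, y ↾ t.length = t}
  by_cases hcase : ∃ m, ∃ u ∈ T, u ∈ U m ∧ u ∉ Escapable (U m) N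
  · obtain ⟨m, u, hu, huU, hesc⟩ := hcase
    obtain ⟨T', hT'T, hT', hbr⟩ :=
      exists_laverSubtree_of_not_mem_escapable hpc (fun _ => sdiff_subset) hu huU hesc
    refine ⟨T', hT'T, hT', fun x hx => Or.inr ⟨mem_iUnion.2 ⟨m, ?_⟩, fun hG => ?_⟩⟩
    · refine (hC m).mem_of_frequently_seqPrefix ((eventually_ge_atTop u.length).frequently.mono
        fun n hn => ?_)
      obtain ⟨y, hy, hyx⟩ := (hbr x hx n hn).1
      exact ⟨y, hy, by simpa using hyx⟩
    · obtain ⟨n, hE, hn⟩ := (hG.and_eventually (eventually_ge_atTop u.length)).exists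
      exact (hbr x hx n hn).2.2 hE
  · push Not at hcase
    obtain ⟨T', hT'T, hT', hbr⟩ := exists_laverSubtree_escaping hpc hEsub (fun _ => sdiff_subset) hs
      (fun t ht hst => hEinf t (hsucc t ht hst)) U hcase
    refine ⟨T', hT'T, hT', fun x hx => Or.inl ⟨(hbr x hx).1, ?_⟩⟩
    simp only [mem_iUnion, not_exists]
    intro m hxC
    obtain ⟨n, hn⟩ := (hbr x hx).2 m
    exact hn ⟨x, hxC, by simp⟩

theorem stmt2 (X : Set (ℕ → ℕ)) (h : IsSigmaSet X) :
    ∀ T : Set (List ℕ), IsLaverTree T →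
      ∃ T' ⊆ T, IsLaverTree T' ∧ LaverBranches T' ∩ X = ∅ := by
  intro T hT
  obtain ⟨G, hG, hsubtree⟩ := hT.exists_isGδ_forall_laverSubtree_symmDiff
  obtain ⟨C, hC, hXG⟩ := h G hG
  obtain ⟨T', hT'T, hT', hbr⟩ := hsubtree C hC
  refine ⟨T', hT'T, hT', eq_empty_of_forall_notMem fun x ⟨hx, hxX⟩ => ?_⟩
  have hiff : x ∈ G ↔ x ∈ ⋃ m, C m := by
    simpa [hxX] using congrArg (x ∈ ·) hXG
  rcases mem_symmDiff.1 (hbr hx) with ⟨h₁, h₂⟩ | ⟨h₁, h₂⟩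
  · exact h₂ (hiff.1 h₁)
  · exact h₂ (hiff.2 h₁)
end

section
/- A metric space Z is a γ_k-set if and only if Z is locally compact and separable. -/
/-- A `k`-cover: a family of open sets such that every compact set is contained in a member. -/
def IsKCover {Z : Type*} [TopologicalSpace Z] (𝒰 : Set (Set Z)) : Prop :=
  (∀ U ∈ 𝒰, IsOpen U) ∧ ∀ C : Set Z, IsCompact C → ∃ U ∈ 𝒰, C ⊆ U

/-- `Z` is a `γ_k`-set: every `k`-cover admits a sequence `(U_n)` such that every
compact set is contained in all but finitely many `U_n`. -/
def IsGammaKSet (Z : Type*) [TopologicalSpace Z] : Prop :=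
  ∀ 𝒰 : Set (Set Z), IsKCover 𝒰 →
    ∃ U : ℕ → Set Z, (∀ n, U n ∈ 𝒰) ∧
      ∀ C : Set Z, IsCompact C → ∀ᶠ n in Filter.atTop, C ⊆ U n

/-!
If `Z` is locally compact and separable, it is σ-compact, and a compact exhaustion `K n`, each
`K n` enlarged to a member of the given k-cover, is the required sequence.

Conversely, applying the γ_k property to the finite unions of an open cover shows that `Z` is
Lindelöf, hence separable since it is metrizable. If a point `z` had no compact neighbourhood,
`Z` would not be compact and the γ_k property applied to complements of points gives a sequence
`x n` escaping every compact set. The complements of the pairs `{x n, p}` with `p` in the `n`-th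
basic neighbourhood of `z` form a k-cover. Along a γ_k-sequence of such sets the indices `n` tend
to infinity, since every finite set `x '' Iio K` is compact, so the points `p` converge to `z`;
but then the compact set `{z} ∪ {p}` is not eventually contained in the members.
-/

open Set Filter Topology

section
variable {Z : Type*} [TopologicalSpace Z]

theorem isGammaKSet_of_sigmaCompactSpace [WeaklyLocallyCompactSpace Z] [SigmaCompactSpace Z] :
    IsGammaKSet Z := by
  intro 𝒰 h𝒰
  let K := CompactExhaustion.choice Z
  choose U hU hKU using fun n => h𝒰.2 (K n) (K.isCompact n)
  refine ⟨U, hU, fun C hC => ?_⟩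
  obtain ⟨N, hN⟩ := K.exists_superset_of_isCompact hC
  filter_upwards [eventually_ge_atTop N] with n hn
  exact hN.trans ((K.subset hn).trans (hKU n))

namespace IsGammaKSet

theorem lindelofSpace (h : IsGammaKSet Z) : LindelofSpace Z := by
  refine ⟨isLindelof_of_countable_subcover fun {ι} U hUo hU => ?_⟩
  have h𝒰 : IsKCover (range fun t : Finset ι => ⋃ i ∈ t, U i) := by
    refine ⟨?_, fun C hC => ?_⟩
    · rintro _ ⟨t, rfl⟩
      exact isOpen_biUnion fun i _ => hUo i
    · obtain ⟨t, ht⟩ := hC.elim_finite_subcover U hUo ((subset_univ C).trans hU)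
      exact ⟨_, mem_range_self t, ht⟩
  obtain ⟨V, hV𝒰, hV⟩ := h _ h𝒰
  choose t ht using hV𝒰
  refine ⟨⋃ n, (t n : Set ι), countable_iUnion fun n => (t n).countable_toSet, fun z _ => ?_⟩
  obtain ⟨n, hn⟩ := (hV {z} isCompact_singleton).exists
  rw [← ht n] at hn
  obtain ⟨i, hi, hzi⟩ := mem_iUnion₂.1 (hn rfl)
  exact mem_biUnion (mem_iUnion.2 ⟨n, hi⟩) hzi

theorem exists_tendsto_cocompact [T1Space Z] [NoncompactSpace Z] (h : IsGammaKSet Z) :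
    ∃ x : ℕ → Z, Tendsto x atTop (cocompact Z) := by
  have h𝒰 : IsKCover (range fun p : Z => ({p}ᶜ : Set Z)) := by
    refine ⟨?_, fun C hC => ?_⟩
    · rintro _ ⟨p, rfl⟩
      exact isOpen_compl_singleton
    · obtain ⟨p, hp⟩ := (ne_univ_iff_exists_notMem C).1 hC.ne_univ
      exact ⟨_, mem_range_self p, subset_compl_singleton_iff.2 hp⟩
  obtain ⟨V, hV𝒰, hV⟩ := h _ h𝒰
  choose x hx using hV𝒰
  refine ⟨x, hasBasis_cocompact.tendsto_right_iff.2 fun C hC => ?_⟩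
  filter_upwards [hV C hC] with n hn
  rw [← hx n] at hn
  exact subset_compl_singleton_iff.1 hn

theorem weaklyLocallyCompactSpace [T1Space Z] [FirstCountableTopology Z] (h : IsGammaKSet Z) :
    WeaklyLocallyCompactSpace Z := by
  refine ⟨fun z => ?_⟩
  by_contra! hz
  have : NoncompactSpace Z := ⟨fun hc => hz univ hc univ_mem⟩
  obtain ⟨x, hx⟩ := h.exists_tendsto_cocompact
  obtain ⟨u, hu⟩ := (𝓝 z).exists_antitone_basis
  have hu_not_sub : ∀ n C, IsCompact C → ∃ p ∈ u n, p ∉ C := fun n C hC =>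
    not_subset.1 fun hsub => hz C hC (mem_of_superset (hu.mem n) hsub)
  have h𝒰 : IsKCover {V | ∃ n, ∃ p ∈ u n, V = ({x n, p}ᶜ : Set Z)} := by
    refine ⟨?_, fun C hC => ?_⟩
    · rintro _ ⟨n, p, -, rfl⟩
      exact (toFinite _).isClosed.isOpen_compl
    · obtain ⟨n, hn⟩ := ((hasBasis_cocompact.tendsto_right_iff.1 hx) C hC).exists
      obtain ⟨p, hpu, hpC⟩ := hu_not_sub n C hC
      exact ⟨_, ⟨n, p, hpu, rfl⟩,
        subset_compl_comm.1 (insert_subset hn (singleton_subset_iff.2 hpC))⟩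
  obtain ⟨V, hV𝒰, hV⟩ := h _ h𝒰
  choose n p hpu hVnp using hV𝒰
  have hn : Tendsto n atTop atTop := by
    refine tendsto_atTop.2 fun K => ?_
    filter_upwards [hV _ ((finite_Iio K).image x).isCompact] with m hm
    by_contra! hlt
    rw [hVnp m] at hm
    exact hm (mem_image_of_mem x hlt) (mem_insert _ _)
  have hp : Tendsto p atTop (𝓝 z) :=
    hu.toHasBasis.tendsto_right_iff.2 fun k _ =>
      (tendsto_atTop.1 hn k).mono fun m hm => hu.antitone hm (hpu m)
  obtain ⟨m, hm⟩ := (hV _ hp.isCompact_insert_range).exists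
  rw [hVnp m] at hm
  exact hm (mem_insert_of_mem _ (mem_range_self m)) (mem_insert_of_mem _ rfl)

end IsGammaKSet
end

theorem stmt3 {Z : Type*} [MetricSpace Z] :
    IsGammaKSet Z ↔ LocallyCompactSpace Z ∧ TopologicalSpace.SeparableSpace Z := by
  refine ⟨fun h => ?_, fun ⟨_, _⟩ => ?_⟩
  · have := h.weaklyLocallyCompactSpace
    have := h.lindelofSpace
    exact ⟨inferInstance, inferInstance⟩
  · exact isGammaKSet_of_sigmaCompactSpace
end

section
/- If Z is a metric space that is a γ_k-set, then Z is locally compact. -/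
open Metric Set Filter Topology

theorem stmt5 {Z : Type*} [MetricSpace Z] (h : IsGammaKSet Z) :
    LocallyCompactSpace Z := by
  have key : ∀ x : Z, ∃ K : Set Z, IsCompact K ∧ K ∈ 𝓝 x := by
    intro x
    by_contra h0
    push_neg at h0
    -- Step 1: all annuli around `x` at some inner radius are non-compact
    have hball : ∀ n : ℕ, ∃ m : ℕ,
        ¬ IsCompact (closedBall x (1/((n:ℝ)+1)) \ ball x (1/((m:ℝ)+1))) := by
      intro n
      by_contra hc
      push_neg at hc
      have hcb : IsCompact (closedBall x (1/((n:ℝ)+1))) := by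
        rw [isCompact_iff_ultrafilter_le_nhds]
        intro f hf
        by_cases hm : ∃ m : ℕ,
            (closedBall x (1/((n:ℝ)+1)) \ ball x (1/((m:ℝ)+1))) ∈ f
        · obtain ⟨m, hmf⟩ := hm
          obtain ⟨a, ha, hfa⟩ := (hc m).ultrafilter_le_nhds f (le_principal_iff.2 hmf)
          exact ⟨a, ha.1, hfa⟩
        · push_neg at hm
          have hballs : ∀ m : ℕ, ball x (1/((m:ℝ)+1)) ∈ f := by
            intro m
            have h1 : (closedBall x (1/((n:ℝ)+1)) \ ball x (1/((m:ℝ)+1)))ᶜ ∈ f :=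
              (Ultrafilter.compl_mem_iff_notMem).2 (hm m)
            have h2 : closedBall x (1/((n:ℝ)+1)) ∈ f := le_principal_iff.1 hf
            filter_upwards [h1, h2] with z hz1 hz2
            by_contra hz
            exact hz1 ⟨hz2, hz⟩
          refine ⟨x, mem_closedBall_self (by positivity), ?_⟩
          refine (Metric.nhds_basis_ball.ge_iff).2 fun ε hε => ?_
          obtain ⟨m, hm'⟩ := exists_nat_one_div_lt hε
          exact mem_of_superset (hballs m) (ball_subset_ball hm'.le)
      exact h0 _ hcb (Metric.closedBall_mem_nhds x (by positivity))
    -- Step 2: extract sequences with no accumulation point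
    have hexists : ∀ n : ℕ, ∃ u : ℕ → Z,
        (∀ j, u j ∈ closedBall x (1/((n:ℝ)+1))) ∧
        ∀ z : Z, ∃ ε > 0, {j | u j ∈ ball z ε}.Finite := by
      intro n
      obtain ⟨m, hm⟩ := hball n
      set A := closedBall x (1/((n:ℝ)+1)) \ ball x (1/((m:ℝ)+1)) with hA
      have hAcl : IsClosed A := Metric.isClosed_closedBall.sdiff isOpen_ball
      have hseq : ¬ IsSeqCompact A := fun hs => hm hs.isCompact
      unfold IsSeqCompact at hseq
      push_neg at hseq
      obtain ⟨v, hv1, hv2⟩ := hseq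
      refine ⟨v, fun j => (hv1 j).1, ?_⟩
      intro z
      by_contra hz
      push_neg at hz
      have hfreq : ∀ i : ℕ, ∃ᶠ k in atTop, v k ∈ ball z (1/((i:ℝ)+1)) := by
        intro i
        rw [Nat.frequently_atTop_iff_infinite]
        exact hz _ (by positivity)
      obtain ⟨φ, hφmono, hφ⟩ := Filter.extraction_forall_of_frequently hfreq
      have htend : Tendsto (v ∘ φ) atTop (𝓝 z) := by
        rw [tendsto_iff_dist_tendsto_zero]
        exact squeeze_zero (fun i => dist_nonneg)
          (fun i => le_of_lt (mem_ball.1 (hφ i)))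
          tendsto_one_div_add_atTop_nhds_zero_nat
      have hzA : z ∈ A :=
        hAcl.mem_of_tendsto htend (Filter.Eventually.of_forall fun i => hv1 (φ i))
      exact hv2 z hzA φ hφmono htend
    choose u hu1 hu2 using hexists
    -- compact sets meet each sequence in finitely many indices
    have hfin : ∀ (n : ℕ) (C : Set Z), IsCompact C → {j | u n j ∈ C}.Finite := by
      intro n C hC
      choose ε hε hfz using hu2 n
      obtain ⟨t, ht⟩ := hC.elim_nhds_subcover (fun z => ball z (ε z))
        (fun z _ => ball_mem_nhds z (hε z))
      have hsub : {j | u n j ∈ C} ⊆ ⋃ z ∈ t, {j | u n j ∈ ball z (ε z)} := by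
        intro j hj
        obtain ⟨z, hz, hzj⟩ := mem_iUnion₂.1 (ht.2 hj)
        exact mem_iUnion₂.2 ⟨z, hz, hzj⟩
      exact ((t.finite_toSet.biUnion fun z _ => hfz z).subset hsub)
    -- images of index sets are closed
    have hclosed : ∀ (n : ℕ) (J : Set ℕ), IsClosed (u n '' J) := by
      intro n J
      rw [← isOpen_compl_iff, isOpen_iff_mem_nhds]
      intro z hz
      obtain ⟨ε, hε, hfz⟩ := hu2 n z
      have hTfin : ((u n '' J) ∩ ball z ε).Finite := by
        have hsub : (u n '' J) ∩ ball z ε ⊆ u n '' {j | u n j ∈ ball z ε} := by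
          rintro w ⟨⟨j, hj, rfl⟩, hw⟩
          exact ⟨j, hw, rfl⟩
        exact (hfz.image (u n)).subset hsub
      have hzT : z ∉ (u n '' J) ∩ ball z ε := fun h' => hz h'.1
      have hnb : ball z ε \ ((u n '' J) ∩ ball z ε) ∈ 𝓝 z :=
        (isOpen_ball.sdiff hTfin.isClosed).mem_nhds ⟨mem_ball_self hε, hzT⟩
      refine Filter.mem_of_superset hnb ?_
      rintro w ⟨hw1, hw2⟩ hwJ
      exact hw2 ⟨hwJ, hw1⟩
    -- the bad k-cover
    set E : ℕ → Finset ℕ → Set Z :=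
      fun N F => (u 0 '' {j | N ≤ j}) ∪ (u N '' {j | j ∉ F}) with hE
    set 𝒰 : Set (Set Z) := {U | ∃ N F, U = (E N F)ᶜ} with h𝒰
    have hKC : IsKCover 𝒰 := by
      constructor
      · rintro U ⟨N, F, rfl⟩
        exact ((hclosed 0 _).union (hclosed N _)).isOpen_compl
      · intro C hC
        obtain ⟨N, hN⟩ : ∃ N : ℕ, ∀ j, u 0 j ∈ C → j < N := by
          obtain ⟨N, hN⟩ := (hfin 0 C hC).bddAbove
          exact ⟨N+1, fun j hj => Nat.lt_succ_of_le (hN hj)⟩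
        refine ⟨(E N ((hfin N C hC).toFinset))ᶜ, ⟨N, _, rfl⟩, ?_⟩
        intro c hc
        simp only [mem_compl_iff]
        intro hcE
        rcases hcE with ⟨j, hj, rfl⟩ | ⟨j, hj, rfl⟩
        · exact absurd (hN j hc) (not_lt.2 hj)
        · exact hj ((hfin N C hC).mem_toFinset.2 hc)
    obtain ⟨V, hVmem, hVγ⟩ := h 𝒰 hKC
    choose N F hVF using hVmem
    by_cases hub : ∀ K M : ℕ, ∃ k, K ≤ k ∧ M ≤ N k
    · -- N k unbounded: converging sequence of excluded points
      choose k hk1 hk2 using fun i => hub i i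
      choose jj hjj using fun i => Infinite.exists_notMem_finset (F (k i))
      set p : ℕ → Z := fun i => u (N (k i)) (jj i) with hp
      have hpt : Tendsto p atTop (𝓝 x) := by
        rw [tendsto_iff_dist_tendsto_zero]
        refine squeeze_zero (fun i => dist_nonneg) (fun i => ?_)
          tendsto_one_div_add_atTop_nhds_zero_nat
        have h1 : dist (p i) x ≤ 1/((N (k i):ℝ)+1) :=
          mem_closedBall.1 (hu1 (N (k i)) (jj i))
        refine h1.trans (one_div_le_one_div_of_le (by positivity) ?_)
        have := hk2 i
        linarith [(Nat.cast_le (α := ℝ)).2 this]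
      have hCc : IsCompact (insert x (Set.range p)) := hpt.isCompact_insert_range
      obtain ⟨K₀, hK₀⟩ := Filter.eventually_atTop.1 (hVγ _ hCc)
      have hsub := hK₀ (k K₀) (hk1 K₀)
      have hpm : p K₀ ∈ insert x (Set.range p) := mem_insert_of_mem _ ⟨K₀, rfl⟩
      have := hsub hpm
      rw [hVF (k K₀)] at this
      exact this (Or.inr ⟨jj K₀, hjj K₀, rfl⟩)
    · -- N k eventually bounded: a fixed point of the tail is always excluded
      push_neg at hub
      obtain ⟨K, M, hKM⟩ := hub
      obtain ⟨K₀, hK₀⟩ := Filter.eventually_atTop.1 (hVγ {u 0 M} isCompact_singleton)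
      have hsub := hK₀ (max K K₀) (le_max_right _ _)
      have := hsub rfl
      rw [hVF (max K K₀)] at this
      exact this (Or.inl ⟨M, (hKM (max K K₀) (le_max_left _ _)).le, rfl⟩)
  haveI : WeaklyLocallyCompactSpace Z := ⟨key⟩
  infer_instance
end

section
/- If for every α < ω₂ there exists u ∈ 2^ω such that the cross-section U_u of a fixed universal G_δ set U ⊆ 2^ω × 2^ω satisfies {β < ω₂ : y_β ∈ U_u} = {β : β < α} for a given sequence (y_β : β < ω₂) in 2^ω, then setting z_α = (y_α, u_α) (identifying (2^ω)² with 2^ω), the set {(z_α, z_β) : α < β} is G_δ in the product, being equal to ⋂_n ⋃_m (C_{n,m} × 2^ω) × (2^ω × D_{n,m}) where U = ⋂_n ⋃_m C_{n,m} × D_{n,m} with clopen C_{n,m}, D_{n,m}. -/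
/-- The ordinals below `ω₂`. -/
abbrev Omega2 : Type 1 := {o : Ordinal // o < (Cardinal.aleph 2).ord}

theorem stmt10 (C D : ℕ → ℕ → Set (ℕ → Bool))
    (hC : ∀ n m, IsClopen (C n m)) (hD : ∀ n m, IsClopen (D n m))
    (y u : Omega2 → (ℕ → Bool))
    (hU : ∀ α β : Omega2,
      ((y β, u α) ∈ ⋂ n, ⋃ m, C n m ×ˢ D n m) ↔ β < α) :
    IsGδ (⋂ n, ⋃ m,
        ((C n m ×ˢ (Set.univ : Set (ℕ → Bool))) ×ˢ
          ((Set.univ : Set (ℕ → Bool)) ×ˢ D n m))) ∧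
    {p : ((ℕ → Bool) × (ℕ → Bool)) × ((ℕ → Bool) × (ℕ → Bool)) |
        ∃ α β : Omega2, α < β ∧ p = ((y α, u α), (y β, u β))} =
      (Set.range (fun α : Omega2 => (y α, u α)) ×ˢ
        Set.range (fun α : Omega2 => (y α, u α))) ∩
      ⋂ n, ⋃ m,
        ((C n m ×ˢ (Set.univ : Set (ℕ → Bool))) ×ˢ
          ((Set.univ : Set (ℕ → Bool)) ×ˢ D n m)) := by
  constructor
  · apply IsGδ.iInter_of_isOpen
    intro n
    apply isOpen_iUnion
    intro m
    exact (((hC n m).2.prod isOpen_univ).prod (isOpen_univ.prod (hD n m).2))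
  · ext p
    simp only [Set.mem_setOf_eq, Set.mem_inter_iff, Set.mem_prod, Set.mem_range,
      Set.mem_iInter, Set.mem_iUnion, Set.mem_univ, and_true, true_and]
    constructor
    · rintro ⟨α, β, hlt, rfl⟩
      refine ⟨⟨⟨α, rfl⟩, ⟨β, rfl⟩⟩, fun n => ?_⟩
      have := (hU β α).mpr hlt
      simp only [Set.mem_iInter, Set.mem_iUnion, Set.mem_prod] at this
      exact this n
    · rintro ⟨⟨⟨α, hα⟩, ⟨β, hβ⟩⟩, hmem⟩
      refine ⟨α, β, ?_, by rw [hα, hβ]⟩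
      apply (hU β α).mp
      simp only [Set.mem_iInter, Set.mem_iUnion, Set.mem_prod]
      intro n
      obtain ⟨m, h1, h2⟩ := hmem n
      refine ⟨m, ?_, ?_⟩
      · have : p.1.1 = y α := (congrArg Prod.fst hα).symm
        rwa [this] at h1
      · have : p.2.2 = u β := (congrArg Prod.snd hβ).symm
        rwa [this] at h2
end

section
/- Assume condition (2): there exist continuous functions (f_α : ω^ω → 2^ω, α < κ) such that for every sequence (y_α ∈ 2^ω : α < κ) there is x ∈ ω^ω with f_α(x) =* y_α for all α (equality except finitely often). Then condition (3) holds: there is a sequence (U_α ⊆ 2^ω × 2^ω : α < κ) of G_δ sets universal for κ-sequences of G_δ sets, i.e., for every sequence (V_α ⊆ 2^ω : α < κ) of G_δ sets there is x with U_α(x) = V_α for all α. -/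
open Set

namespace Stmt11Aux

def pref (y : ℕ → Bool) (n : ℕ) : List Bool := (List.range n).map y

lemma pref_length (y : ℕ → Bool) (n : ℕ) : (pref y n).length = n := by simp [pref]

lemma pref_eq_iff {y y' : ℕ → Bool} {n : ℕ} :
    pref y n = pref y' n ↔ ∀ t < n, y t = y' t := by
  constructor
  · intro h t ht
    have := congrArg (fun l => l.getD t true) h
    simpa [pref, List.getD_eq_getElem?_getD, ht] using this
  · intro h
    apply List.ext_getElem (by simp [pref])
    intro t h1 h2
    simp only [pref, List.getElem_map, List.getElem_range]
    exact h t (by simpa [pref] using h1)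

def A : Set (ℕ → Bool) := {w | ∀ n, ∃ m, w (Nat.pair n m) = false}

noncomputable def D (w : ℕ → Bool) (n : ℕ) : ℕ :=
  sInf {m | w (Nat.pair n m) = false}

lemma D_spec {w : ℕ → Bool} {j : ℕ} (hw : ∃ m, w (Nat.pair j m) = false) :
    w (Nat.pair j (D w j)) = false ∧ ∀ m < D w j, w (Nat.pair j m) ≠ false := by
  constructor
  · exact Nat.sInf_mem hw
  · intro m hm
    exact Nat.notMem_of_lt_sInf hm

lemma isOpen_coord (q : ℕ) (b : Bool) : IsOpen {w : ℕ → Bool | w q = b} := by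
  have h1 : IsOpen ({b} : Set Bool) := isOpen_discrete _
  have : {w : ℕ → Bool | w q = b} = (fun w : ℕ → Bool => w q) ⁻¹' {b} := rfl
  rw [this]
  exact (continuous_apply q).isOpen_preimage _ h1

lemma isOpen_fst_coord (q : ℕ) (b : Bool) :
    IsOpen {p : (ℕ → Bool) × (ℕ → Bool) | p.1 q = b} := by
  have : {p : (ℕ → Bool) × (ℕ → Bool) | p.1 q = b}
      = Prod.fst ⁻¹' {w : ℕ → Bool | w q = b} := rfl
  rw [this]
  exact continuous_fst.isOpen_preimage _ (isOpen_coord q b)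

lemma isOpen_snd_coord (q : ℕ) (b : Bool) :
    IsOpen {p : (ℕ → Bool) × (ℕ → Bool) | p.2 q = b} := by
  have : {p : (ℕ → Bool) × (ℕ → Bool) | p.2 q = b}
      = Prod.snd ⁻¹' {w : ℕ → Bool | w q = b} := rfl
  rw [this]
  exact continuous_snd.isOpen_preimage _ (isOpen_coord q b)

lemma isGδ_A : IsGδ A := by
  have : A = ⋂ n, ⋃ m, {w : ℕ → Bool | w (Nat.pair n m) = false} := by
    ext w; simp [A]
  rw [this]
  exact .iInter fun n => IsOpen.isGδ (isOpen_iUnion fun m => isOpen_coord _ _)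

lemma IsGδ.preimage' {X Y : Type*} [TopologicalSpace X] [TopologicalSpace Y]
    {s : Set Y} (hs : IsGδ s) {g : X → Y} (hg : Continuous g) : IsGδ (g ⁻¹' s) := by
  obtain ⟨O, hO, rfl⟩ := hs.eq_iInter_nat
  rw [preimage_iInter]
  exact .iInter fun n => (hg.isOpen_preimage _ (hO n)).isGδ

def enc (x : ℕ → ℕ) : ℕ → Bool := fun p => decide (p.unpair.2 < x p.unpair.1)

lemma enc_mem_A (x : ℕ → ℕ) : enc x ∈ A := fun n => ⟨x n, by simp [enc]⟩

lemma D_enc (x : ℕ → ℕ) : D (enc x) = x := by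
  funext n
  have hset : {m | enc x (Nat.pair n m) = false} = {m | x n ≤ m} := by
    ext m; simp [enc]
  rw [D, hset]
  refine le_antisymm (Nat.sInf_le (by simp : x n ∈ {m | x n ≤ m})) ?_
  exact Nat.sInf_mem (⟨x n, by simp⟩ : {m | x n ≤ m}.Nonempty)

lemma D_eq_of_agree {w w' : ℕ → Bool} {j : ℕ} (hw : ∃ m, w (Nat.pair j m) = false)
    (hagree : ∀ m ≤ D w j, w' (Nat.pair j m) = w (Nat.pair j m)) : D w' j = D w j := by
  obtain ⟨hspec, hmin⟩ := D_spec hw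
  rw [D]
  refine le_antisymm (Nat.sInf_le ?_) ?_
  · show w' (Nat.pair j (D w j)) = false
    rw [hagree _ le_rfl]; exact hspec
  · by_contra hlt
    push_neg at hlt
    have hmem := Nat.sInf_mem (⟨D w j, by
      show w' (Nat.pair j (D w j)) = false
      rw [hagree _ le_rfl]; exact hspec⟩ : {m | w' (Nat.pair j m) = false}.Nonempty)
    set m := sInf {m | w' (Nat.pair j m) = false}
    have : w (Nat.pair j m) = false := by
      rw [← hagree m hlt.le]; exact hmem
    exact hmin m hlt this

lemma exists_finset_forall_mem {X : ℕ → Type*} [∀ n, TopologicalSpace (X n)]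
    {O : Set (∀ n, X n)} (hO : IsOpen O) {v : ∀ n, X n} (hv : v ∈ O) :
    ∃ I : Finset ℕ, ∀ v', (∀ j ∈ I, v' j = v j) → v' ∈ O := by
  obtain ⟨I, u, hu, hsub⟩ := isOpen_pi_iff.1 hO v hv
  refine ⟨I, fun v' hv' => hsub fun j hj => ?_⟩
  rw [hv' j hj]
  exact (hu j hj).2

def Phi (w : ℕ → Bool) (y : ℕ → Bool) : Prop :=
  ∀ k N : ℕ, ∃ n ≥ N, w (Encodable.encode (pref y n, k)) = true

end Stmt11Aux

open Stmt11Aux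

theorem stmt11 {ι : Type*} (f : ι → (ℕ → ℕ) → (ℕ → Bool))
    (hc : ∀ i, Continuous (f i))
    (h : ∀ y : ι → (ℕ → Bool), ∃ x : ℕ → ℕ, ∀ i, {n : ℕ | f i x n ≠ y i n}.Finite) :
    ∃ U : ι → Set ((ℕ → Bool) × (ℕ → Bool)), (∀ i, IsGδ (U i)) ∧
      ∀ V : ι → Set (ℕ → Bool), (∀ i, IsGδ (V i)) →
        ∃ x : ℕ → Bool, ∀ i, {y | (x, y) ∈ U i} = V i := by
  classical
  refine ⟨fun i => {p | p.1 ∈ A ∧ Phi (f i (D p.1)) p.2}, ?_, ?_⟩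
  · -- each U i is Gδ
    intro i
    set T : ℕ → ℕ → Set ((ℕ → Bool) × (ℕ → Bool)) := fun k N =>
      {p | ∃ n ≥ N, f i (D p.1) (Encodable.encode (pref p.2 n, k)) = true} with hT
    show IsGδ {p : (ℕ → Bool) × (ℕ → Bool) | p.1 ∈ A ∧ Phi (f i (D p.1)) p.2}
    have hU : {p : (ℕ → Bool) × (ℕ → Bool) | p.1 ∈ A ∧ Phi (f i (D p.1)) p.2}
        = ⋂ k, ⋂ N, ((Prod.fst ⁻¹' A) ∩ T k N) := by
      ext p
      simp only [mem_setOf_eq, mem_iInter, mem_inter_iff, mem_preimage, hT, Phi]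
      constructor
      · rintro ⟨h1, h2⟩ k N; exact ⟨h1, h2 k N⟩
      · intro hp; exact ⟨(hp 0 0).1, fun k N => (hp k N).2⟩
    rw [hU]
    refine .iInter fun k => .iInter fun N => ?_
    have key : ∀ p ∈ (Prod.fst ⁻¹' A) ∩ T k N,
        ∃ B : Set ((ℕ → Bool) × (ℕ → Bool)), IsOpen B ∧ p ∈ B ∧ B ⊆ T k N := by
      rintro ⟨x, y⟩ ⟨hxA, n, hnN, hfn⟩
      have hopen : IsOpen ((fun v : ℕ → ℕ => f i v (Encodable.encode (pref y n, k))) ⁻¹'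
          ({true} : Set Bool)) := by
        have hb : IsOpen ({true} : Set Bool) := isOpen_discrete _
        exact ((continuous_apply _).comp (hc i)).isOpen_preimage _ hb
      obtain ⟨I, hI⟩ := exists_finset_forall_mem hopen hfn
      refine ⟨{q | (∀ j ∈ I, ∀ m ≤ D x j, q.1 (Nat.pair j m) = x (Nat.pair j m)) ∧
          ∀ t < n, q.2 t = y t}, ?_, ?_, ?_⟩
      · have heq : {q : (ℕ → Bool) × (ℕ → Bool) |
            (∀ j ∈ I, ∀ m ≤ D x j, q.1 (Nat.pair j m) = x (Nat.pair j m)) ∧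
              ∀ t < n, q.2 t = y t}
            = (⋂ j ∈ I, ⋂ m ∈ Finset.range (D x j + 1),
                {q : (ℕ → Bool) × (ℕ → Bool) | q.1 (Nat.pair j m) = x (Nat.pair j m)}) ∩
              (⋂ t ∈ Finset.range n, {q : (ℕ → Bool) × (ℕ → Bool) | q.2 t = y t}) := by
          ext q
          simp only [mem_setOf_eq, mem_inter_iff, mem_iInter, Finset.mem_range,
            Nat.lt_succ_iff, Finset.mem_coe]
        rw [heq]
        refine IsOpen.inter ?_ ?_
        · exact isOpen_biInter_finset fun j _ => isOpen_biInter_finset fun m _ =>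
            isOpen_fst_coord _ _
        · exact isOpen_biInter_finset fun t _ => isOpen_snd_coord _ _
      · exact ⟨fun _ _ _ _ => rfl, fun _ _ => rfl⟩
      · rintro ⟨x', y'⟩ ⟨hq1, hq2⟩
        refine ⟨n, hnN, ?_⟩
        have hpref : pref y' n = pref y n := pref_eq_iff.2 hq2
        have hD : ∀ j ∈ I, D x' j = D x j := fun j hj =>
          D_eq_of_agree (hxA j) (hq1 j hj)
        have := hI (D x') hD
        simpa [hpref] using this
    choose! B hBopen hBmem hBsub using key
    have heq : (Prod.fst ⁻¹' A) ∩ T k N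
        = (Prod.fst ⁻¹' A) ∩ ⋃ p ∈ (Prod.fst ⁻¹' A) ∩ T k N, B p := by
      ext p
      constructor
      · intro hp
        exact ⟨hp.1, mem_biUnion hp (hBmem p hp)⟩
      · rintro ⟨h1, h2⟩
        simp only [mem_iUnion] at h2
        obtain ⟨q, hq, hpq⟩ := h2
        exact ⟨h1, hBsub q hq hpq⟩
    rw [heq]
    refine IsGδ.inter (IsGδ.preimage' isGδ_A continuous_fst) ?_
    exact IsOpen.isGδ (isOpen_biUnion fun p hp => hBopen p hp)
  · -- universality
    intro V hV
    choose O hOopen hOeq using fun i => (hV i).eq_iInter_nat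
    set z : ι → ℕ → Bool := fun i p => decide (∃ s : List Bool, ∃ k : ℕ,
        Encodable.encode (s, k) = p ∧ ∀ y' : ℕ → Bool, pref y' s.length = s → y' ∈ O i k)
      with hz
    obtain ⟨x₀, hx₀⟩ := h z
    refine ⟨enc x₀, fun i => ?_⟩
    have hA : enc x₀ ∈ A := enc_mem_A x₀
    have hD : D (enc x₀) = x₀ := D_enc x₀
    set w : ℕ → Bool := f i x₀ with hw
    have hF : {n : ℕ | w n ≠ z i n}.Finite := hx₀ i
    have hG : ((fun q : List Bool × ℕ => Encodable.encode q) ⁻¹'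
        {n : ℕ | w n ≠ z i n}).Finite :=
      hF.preimage Encodable.encode_injective.injOn
    obtain ⟨L, hL⟩ : ∃ L : ℕ, ∀ q : List Bool × ℕ,
        Encodable.encode q ∈ {n : ℕ | w n ≠ z i n} → q.1.length ≤ L := by
      obtain ⟨L, hL⟩ := (hG.image fun q => q.1.length).bddAbove
      exact ⟨L, fun q hq => hL (mem_image_of_mem _ hq)⟩
    have hwz : ∀ q : List Bool × ℕ, L < q.1.length →
        w (Encodable.encode q) = z i (Encodable.encode q) := by
      intro q hq
      by_contra hne
      exact absurd (hL q hne) (not_le.2 hq)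
    have hmem : {y | (enc x₀, y) ∈ ({p | p.1 ∈ A ∧ Phi (f i (D p.1)) p.2}
        : Set ((ℕ → Bool) × (ℕ → Bool)))} = {y | Phi w y} := by
      ext y
      simp only [mem_setOf_eq, hD, hA, true_and, hw]
    rw [hmem, hOeq i]
    ext y
    simp only [mem_setOf_eq, mem_iInter]
    constructor
    · intro hy k
      obtain ⟨n, hn, hwn⟩ := hy k (L + 1)
      have hlen : L < ((pref y n, k) : List Bool × ℕ).1.length := by
        simpa [pref_length] using hn
      rw [hwz _ hlen] at hwn
      rw [hz] at hwn
      simp only [decide_eq_true_eq] at hwn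
      obtain ⟨s, k', hcode, hs⟩ := hwn
      obtain ⟨hs1, hs2⟩ := Prod.ext_iff.1 (Encodable.encode_injective hcode)
      simp only at hs1 hs2
      rw [hs2, hs1] at hs
      exact hs y (by rw [pref_length])
    · intro hy k N
      obtain ⟨I, hI⟩ := exists_finset_forall_mem (hOopen i k) (hy k)
      set n : ℕ := max N (max (L + 1) (I.sup id + 1)) with hn
      refine ⟨n, le_max_left _ _, ?_⟩
      have hcyl : ∀ y' : ℕ → Bool, pref y' (pref y n).length = pref y n → y' ∈ O i k := by
        intro y' hy'
        rw [pref_length] at hy'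
        refine hI y' fun j hj => ?_
        have hjn : j < n := by
          calc j ≤ I.sup id := Finset.le_sup (f := id) hj
          _ < n := lt_of_lt_of_le (Nat.lt_succ_self _)
              (le_trans (le_max_right _ _) (le_max_right _ _))
        exact pref_eq_iff.1 hy' j hjn
      have hlen : L < ((pref y n, k) : List Bool × ℕ).1.length := by
        have : L + 1 ≤ n := le_trans (le_max_left _ _) (le_max_right _ _)
        simpa [pref_length] using this
      rw [hwz _ hlen, hz]
      simp only [decide_eq_true_eq]
      exact ⟨pref y n, k, rfl, hcyl⟩
end

section
/- Assume condition (3): there is a sequence (U_α ⊆ 2^ω × 2^ω : α < κ) of G_δ sets such that for every sequence (V_α ⊆ 2^ω : α < κ) of G_δ sets there exists x ∈ 2^ω with U_α(x) = V_α for all α < κ. Then there exists a Q-set X ⊆ 2^ω with |X| = κ. -/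
/-- `X ⊆ 2^ω` is a Q-set: every subset of `X` is a relative `G_δ` in `X`. -/
def IsQSet (X : Set (ℕ → Bool)) : Prop :=
  ∀ A ⊆ X, ∃ G : Set (ℕ → Bool), IsGδ G ∧ A = X ∩ G

lemma isGδ_preimage_aux {X Y : Type*} [TopologicalSpace X] [TopologicalSpace Y]
    {f : X → Y} (hf : Continuous f) {s : Set Y} (hs : IsGδ s) : IsGδ (f ⁻¹' s) := by
  obtain ⟨T, hT, hTc, rfl⟩ := hs
  rw [Set.sInter_eq_biInter, Set.preimage_iInter₂]
  exact IsGδ.biInter hTc fun t ht => ((hT t ht).preimage hf).isGδ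

theorem stmt12 {ι : Type} [Infinite ι] (hκ : Cardinal.mk ι < Cardinal.continuum)
    (U : ι → Set ((ℕ → Bool) × (ℕ → Bool))) (hGδ : ∀ i, IsGδ (U i))
    (hdistinct : Function.Injective U)
    (huniv : ∀ V : ι → Set (ℕ → Bool), (∀ i, IsGδ (V i)) →
      ∃ x : ℕ → Bool, ∀ i, {y | (x, y) ∈ U i} = V i) :
    ∃ X : Set (ℕ → Bool), IsQSet X ∧ Cardinal.mk X = Cardinal.mk ι := by
  classical
  obtain ⟨i0⟩ : Nonempty ι := inferInstance
  -- Step 1: code points for subsets of ι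
  have hcode : ∀ B : Set ι, ∃ x : ℕ → Bool,
      ∀ i, {y | (x, y) ∈ U i} = (if i ∈ B then Set.univ else ∅) := by
    intro B
    apply huniv
    intro i
    split
    · exact IsGδ.univ
    · exact IsGδ.empty
  choose xB hxB using hcode
  -- Step 2: diagonal Gδ sets
  set D : ι → Set (ℕ → Bool) := fun i => (fun x => (x, x)) ⁻¹' U i with hD_def
  have hDGδ : ∀ i, IsGδ (D i) := fun i =>
    isGδ_preimage_aux (continuous_id.prodMk continuous_id) (hGδ i)
  have hxBD : ∀ (B : Set ι) (i : ι), xB B ∈ D i ↔ i ∈ B := by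
    intro B i
    have h := hxB B i
    constructor
    · intro hmem
      have : xB B ∈ {y | (xB B, y) ∈ U i} := hmem
      rw [h] at this
      by_contra hi
      simp [hi] at this
    · intro hi
      have : xB B ∈ (if i ∈ B then Set.univ else (∅ : Set (ℕ → Bool))) := by
        simp [hi]
      have : xB B ∈ {y | (xB B, y) ∈ U i} := by rw [h]; exact this
      exact this
  -- Step 3: points a i whose sections are all D i
  have hpoint : ∀ i : ι, ∃ x : ℕ → Bool, ∀ j, {y | (x, y) ∈ U j} = D i := by
    intro i
    exact huniv (fun _ => D i) (fun _ => hDGδ i)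
  choose a ha using hpoint
  -- a is injective
  have hainj : Function.Injective a := by
    intro i i' h
    have hDD : D i = D i' := by
      have h1 := ha i i0
      have h2 := ha i' i0
      rw [h] at h1
      rw [h1] at h2
      exact h2
    have h3 : xB {i} ∈ D i := (hxBD {i} i).mpr rfl
    rw [hDD] at h3
    exact ((hxBD {i} i').mp h3).symm
  refine ⟨Set.range a, ?_, ?_⟩
  · -- Q-set
    intro A hA
    set B : Set ι := {i | a i ∈ A} with hB_def
    refine ⟨(fun y => (y, xB B)) ⁻¹' U i0, isGδ_preimage_aux
      (continuous_id.prodMk continuous_const) (hGδ i0), ?_⟩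
    have key : ∀ i : ι, a i ∈ (fun y => (y, xB B)) ⁻¹' U i0 ↔ i ∈ B := by
      intro i
      have h := ha i i0
      constructor
      · intro hmem
        have : xB B ∈ {y | (a i, y) ∈ U i0} := hmem
        rw [h] at this
        exact (hxBD B i).mp this
      · intro hi
        have : xB B ∈ D i := (hxBD B i).mpr hi
        have : xB B ∈ {y | (a i, y) ∈ U i0} := by rw [h]; exact this
        exact this
    ext x
    constructor
    · intro hx
      obtain ⟨i, rfl⟩ := hA hx
      exact ⟨⟨i, rfl⟩, (key i).mpr hx⟩
    · rintro ⟨⟨i, rfl⟩, hx⟩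
      exact (key i).mp hx
  · exact Cardinal.mk_range_eq a hainj
end

section
/- Let X be a Q-set (every subset of X is a relative G_δ), let X′ be a disjoint copy of X with bijection p ↦ p′, and topologize Y = X ∪ X′ by declaring open exactly the sets U ∪ V′ where U, V ⊆ X are open in X and U ⊆ V. Then Y is a T₀ space, and for subsets A, B ⊆ X: the set A ∪ B′ is G_δ in Y iff A ⊆ B; moreover A ∪ (A ∪ B)′ is the minimal G_δ subset of Y containing A ∪ B′. -/
/-!
Every open set of `Y = X ∪ X′` that contains `p` also contains `p′`, so `p′ ⤳ p`, and this
persists to countable intersections: a Gδ set containing `p` contains `p′`. Hence a Gδ set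
`A ∪ B′` has `A ⊆ B`, and any Gδ set containing `A ∪ B′` contains `A ∪ (A ∪ B)′`. Conversely,
for `A ⊆ B`, `A ∪ B′ = (A ∪ X′) ∩ (B ∪ B′)`; the first factor is Gδ because `A` is, and the
second is the preimage of `B` under the continuous folding map `Y → X`. Since `X` is a Q-set,
`A` and `B` are always Gδ.
-/

/-- The "double" of a space `X`: `Y = X ∪ X′` (coded as `X ⊕ X`, with `Sum.inl`
the original copy and `Sum.inr` the primed copy), where the open sets are exactly
the sets `U ∪ V′` with `U, V` open in `X` and `U ⊆ V`. -/
def doubleTop (X : Type*) [TopologicalSpace X] : TopologicalSpace (X ⊕ X) where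
  IsOpen S := IsOpen (Sum.inl ⁻¹' S : Set X) ∧ IsOpen (Sum.inr ⁻¹' S : Set X) ∧
    (Sum.inl ⁻¹' S : Set X) ⊆ (Sum.inr ⁻¹' S : Set X)
  isOpen_univ := ⟨isOpen_univ, isOpen_univ, subset_rfl⟩
  isOpen_inter := fun s t hs ht =>
    ⟨hs.1.inter ht.1, hs.2.1.inter ht.2.1, fun x hx => ⟨hs.2.2 hx.1, ht.2.2 hx.2⟩⟩
  isOpen_sUnion := fun S hS => by
    refine ⟨?_, ?_, ?_⟩
    · rw [Set.preimage_sUnion]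
      exact isOpen_biUnion fun s hs => (hS s hs).1
    · rw [Set.preimage_sUnion]
      exact isOpen_biUnion fun s hs => (hS s hs).2.1
    · rw [Set.preimage_sUnion, Set.preimage_sUnion]
      exact Set.iUnion₂_mono fun s hs => (hS s hs).2.2

theorem Specializes.mem_of_isGδ {Z : Type*} [TopologicalSpace Z] {x y : Z} {s : Set Z}
    (h : x ⤳ y) (hs : IsGδ s) (hy : y ∈ s) : x ∈ s := by
  obtain ⟨T, hT, -, rfl⟩ := hs
  exact Set.mem_sInter.2 fun t ht => h.mem_open (hT t ht) (hy t ht)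

open Topology

namespace doubleTop

variable {X : Type*} [TopologicalSpace X]

theorem continuous_elim_id_id :
    @Continuous _ _ (doubleTop X) _ (Sum.elim id id : X ⊕ X → X) := by
  let _ := doubleTop X
  exact ⟨fun _ hU => ⟨hU, hU, subset_rfl⟩⟩

theorem isOpen_image_inl_union_range_inr {U : Set X} (hU : IsOpen U) :
    IsOpen[doubleTop X] (Sum.inl '' U ∪ Set.range Sum.inr) := by
  refine ⟨?_, ?_, ?_⟩ <;> simp [Set.preimage_image_eq _ Sum.inl_injective, hU]

theorem isGδ_image_inl_union_range_inr {A : Set X} (hA : IsGδ A) :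
    @IsGδ _ (doubleTop X) (Sum.inl '' A ∪ Set.range Sum.inr) := by
  let _ := doubleTop X
  obtain ⟨U, hU, rfl⟩ := hA.eq_iInter_nat
  rw [Sum.inl_injective.injOn.image_iInter_eq, Set.iInter_union]
  exact .iInter_of_isOpen fun n => isOpen_image_inl_union_range_inr (hU n)

theorem isGδ_image_union_of_subset {A B : Set X} (hA : IsGδ A) (hB : IsGδ B) (hAB : A ⊆ B) :
    @IsGδ _ (doubleTop X) (Sum.inl '' A ∪ Sum.inr '' B) := by
  have hsplit : Sum.inl '' A ∪ Sum.inr '' B =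
      (Sum.inl '' A ∪ Set.range Sum.inr) ∩ (Sum.elim id id ⁻¹' B) := by
    ext (x | x)
    · simpa using @hAB x
    · simp
  let _ := doubleTop X
  rw [hsplit]
  exact (isGδ_image_inl_union_range_inr hA).inter (hB.preimage continuous_elim_id_id)

theorem specializes_inr_inl (x : X) : @Specializes _ (doubleTop X) (Sum.inr x) (Sum.inl x) := by
  let _ := doubleTop X
  exact specializes_iff_forall_open.2 fun _ hS hx => hS.2.2 hx

theorem t0Space [T0Space X] : @T0Space _ (doubleTop X) := by
  let _ := doubleTop X
  refine t0Space_iff_inseparable _ |>.2 fun x y hxy => ?_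
  have hrange : IsOpen (Set.range (Sum.inr : X → X ⊕ X)) := by
    simpa using isOpen_image_inl_union_range_inr (isOpen_empty (X := X))
  have hfold := hxy.map continuous_elim_id_id
  rcases x with x | x <;> rcases y with y | y
  · exact congrArg _ hfold.eq
  · simpa using hxy.mem_open_iff hrange
  · simpa using hxy.mem_open_iff hrange
  · exact congrArg _ hfold.eq

theorem image_union_image_union_subset {A B : Set X} {Q : Set (X ⊕ X)}
    (hQ : @IsGδ _ (doubleTop X) Q) (hAB : Sum.inl '' A ∪ Sum.inr '' B ⊆ Q) :
    Sum.inl '' A ∪ Sum.inr '' (A ∪ B) ⊆ Q := by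
  let _ := doubleTop X
  rintro _ (⟨x, hx, rfl⟩ | ⟨x, hx | hx, rfl⟩)
  · exact hAB (.inl ⟨x, hx, rfl⟩)
  · exact (specializes_inr_inl x).mem_of_isGδ hQ (hAB (.inl ⟨x, hx, rfl⟩))
  · exact hAB (.inr ⟨x, hx, rfl⟩)

theorem subset_of_isGδ_image_union {A B : Set X}
    (h : @IsGδ _ (doubleTop X) (Sum.inl '' A ∪ Sum.inr '' B)) : A ⊆ B := fun x hx => by
  simpa using image_union_image_union_subset h subset_rfl (.inr ⟨x, .inl hx, rfl⟩)

end doubleTop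

theorem stmt15 {X : Type*} [TopologicalSpace X] [T0Space X]
    (hQ : ∀ A : Set X, IsGδ A) :
    @T0Space (X ⊕ X) (doubleTop X) ∧
    ∀ A B : Set X,
      (@IsGδ (X ⊕ X) (doubleTop X) (Sum.inl '' A ∪ Sum.inr '' B) ↔ A ⊆ B) ∧
      (@IsGδ (X ⊕ X) (doubleTop X) (Sum.inl '' A ∪ Sum.inr '' (A ∪ B)) ∧
        Sum.inl '' A ∪ Sum.inr '' B ⊆ Sum.inl '' A ∪ Sum.inr '' (A ∪ B) ∧
        ∀ Q : Set (X ⊕ X), @IsGδ (X ⊕ X) (doubleTop X) Q →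
          Sum.inl '' A ∪ Sum.inr '' B ⊆ Q →
          Sum.inl '' A ∪ Sum.inr '' (A ∪ B) ⊆ Q) :=
  ⟨doubleTop.t0Space, fun A B =>
    ⟨⟨doubleTop.subset_of_isGδ_image_union,
        doubleTop.isGδ_image_union_of_subset (hQ A) (hQ B)⟩,
      doubleTop.isGδ_image_union_of_subset (hQ A) (hQ _) Set.subset_union_left,
      Set.union_subset_union_right _ (Set.image_mono Set.subset_union_right),
      fun _ => doubleTop.image_union_image_union_subset⟩⟩
end

section
/- Every thin set of reals X ⊆ ℝ that is disjoint from the rationals is a σ-set: for every G_δ subset G of ℝ there is an F_σ set F with X ∩ G = X ∩ F. -/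
/-- An OIT (ordered interval tree): a sequence `(G_n)` of families of pairwise
disjoint open intervals such that every interval of `G_{n+1}` is contained in
some interval of `G_n`. -/
def IsOIT (G : ℕ → Set (Set ℝ)) : Prop :=
  (∀ n, ∀ I ∈ G n, ∃ a b : ℝ, I = Set.Ioo a b) ∧
  (∀ n, (G n).PairwiseDisjoint id) ∧
  (∀ n, ∀ I ∈ G (n + 1), ∃ J ∈ G n, I ⊆ J)

/-- `Y` is `(G_n)`-small: there are finite `F_n ⊆ G_n` such that for every
`x ∈ Y` and every `n`, if `x ∈ ⋃ G_n` then `x ∈ ⋃ F_n`. -/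
def IsOITSmall (G : ℕ → Set (Set ℝ)) (Y : Set ℝ) : Prop :=
  ∃ F : ℕ → Set (Set ℝ), (∀ n, F n ⊆ G n ∧ (F n).Finite) ∧
    ∀ x ∈ Y, ∀ n, x ∈ ⋃₀ G n → x ∈ ⋃₀ F n

/-- `X` is thin: for every OIT `(G_n)`, `X` is a countable union of `(G_n)`-small sets. -/
def IsThin (X : Set ℝ) : Prop :=
  ∀ G : ℕ → Set (Set ℝ), IsOIT G →
    ∃ Y : ℕ → Set ℝ, X = (⋃ n, Y n) ∧ ∀ n, IsOITSmall G (Y n)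

/-! Write `G = ⋂ V m` with `V m` open and decreasing, and let the `m`-th level of an OIT consist
of the maximal dyadic intervals whose *closures* lie in `V m`; these levels cover every irrational
point of `V m`. If `Y` is small for this OIT, witnessed by finite `F m`, then
`C = ⋂ m, ⋃ I ∈ F m, closure I` is closed, lies in `G` because the closures do, and contains
`Y ∩ G` off the rationals. Covering `X` by countably many small sets gives `X ∩ G = X ∩ ⋃ k, C k`.
-/

open Set

def dyadicInterval (n : ℕ) (k : ℤ) : Set ℝ := Ioo ((k : ℝ) / 2 ^ n) ((k + 1) / 2 ^ n)

lemma mem_dyadicInterval {x : ℝ} {n : ℕ} {k : ℤ} :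
    x ∈ dyadicInterval n k ↔ (k : ℝ) < x * 2 ^ n ∧ x * 2 ^ n < k + 1 := by
  simp only [dyadicInterval, mem_Ioo, div_lt_iff₀ (by positivity : (0 : ℝ) < 2 ^ n),
    lt_div_iff₀ (by positivity : (0 : ℝ) < 2 ^ n)]

lemma closure_dyadicInterval (n : ℕ) (k : ℤ) :
    closure (dyadicInterval n k) = Icc ((k : ℝ) / 2 ^ n) ((k + 1) / 2 ^ n) :=
  closure_Ioo (div_lt_div_of_pos_right (lt_add_one _) (by positivity)).ne

lemma eq_floor_of_mem_dyadicInterval {x : ℝ} {n : ℕ} {k : ℤ} (hx : x ∈ dyadicInterval n k) :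
    k = ⌊x * 2 ^ n⌋ := by
  rw [mem_dyadicInterval] at hx
  exact (Int.floor_eq_iff.mpr ⟨hx.1.le, hx.2⟩).symm

lemma dyadicInterval_succ_subset (n : ℕ) (k : ℤ) :
    dyadicInterval (n + 1) k ⊆ dyadicInterval n (k / 2) := by
  intro x hx
  rw [mem_dyadicInterval, pow_succ] at *
  have hlow : ((2 * (k / 2) : ℤ) : ℝ) ≤ k := by exact_mod_cast (by omega : 2 * (k / 2) ≤ k)
  have hupp : (k : ℝ) + 1 ≤ ((2 * (k / 2) + 2 : ℤ) : ℝ) := by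
    exact_mod_cast (by omega : k + 1 ≤ 2 * (k / 2) + 2)
  push_cast at hlow hupp
  constructor <;> linarith

lemma dyadicInterval_subset_of_mem {x : ℝ} {n n' : ℕ} {k k' : ℤ} (h : n ≤ n')
    (hx : x ∈ dyadicInterval n k) (hx' : x ∈ dyadicInterval n' k') :
    dyadicInterval n' k' ⊆ dyadicInterval n k := by
  induction h generalizing k' with
  | refl => rw [eq_floor_of_mem_dyadicInterval hx, eq_floor_of_mem_dyadicInterval hx']
  | step _ ih =>
    exact (dyadicInterval_succ_subset _ k').trans (ih (dyadicInterval_succ_subset _ k' hx'))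

lemma mem_dyadicInterval_floor {x : ℝ} (hx : Irrational x) (n : ℕ) :
    x ∈ dyadicInterval n ⌊x * 2 ^ n⌋ := by
  have hne : (⌊x * 2 ^ n⌋ : ℝ) ≠ x * 2 ^ n := fun h =>
    hx.ne_rat (⌊x * 2 ^ n⌋ / 2 ^ n) (by push_cast; rw [h]; field_simp)
  exact mem_dyadicInterval.mpr ⟨(Int.floor_le _).lt_of_ne hne, Int.lt_floor_add_one _⟩

lemma closure_dyadicInterval_subset_ball {x : ℝ} {n : ℕ} {k : ℤ} (hx : x ∈ dyadicInterval n k)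
    {ε : ℝ} (hε : 1 / 2 ^ n < ε) : closure (dyadicInterval n k) ⊆ Metric.ball x ε := by
  rw [closure_dyadicInterval, Real.ball_eq_Ioo]
  obtain ⟨hlow, hupp⟩ := hx
  have hwidth : ((k : ℝ) + 1) / 2 ^ n = k / 2 ^ n + 1 / 2 ^ n := by ring
  exact Icc_subset_Ioo (by linarith) (by linarith)

section

def maximalDyadicIntervals (W : Set ℝ) : Set (Set ℝ) :=
  {I | ∃ n k, I = dyadicInterval n k ∧ closure I ⊆ W ∧
    ∀ n' < n, ∀ k', I ⊆ dyadicInterval n' k' → ¬closure (dyadicInterval n' k') ⊆ W}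

variable {W : Set ℝ}

lemma closure_subset_of_mem_maximalDyadicIntervals {I : Set ℝ}
    (hI : I ∈ maximalDyadicIntervals W) : closure I ⊆ W := by
  obtain ⟨n, k, rfl, hW, -⟩ := hI
  exact hW

lemma exists_maximalDyadicInterval_superset (n : ℕ) (k : ℤ)
    (hW : closure (dyadicInterval n k) ⊆ W) :
    ∃ J ∈ maximalDyadicIntervals W, dyadicInterval n k ⊆ J := by
  induction n using Nat.strong_induction_on generalizing k with
  | _ n ih =>
    by_cases hmax : ∀ n' < n, ∀ k', dyadicInterval n k ⊆ dyadicInterval n' k' →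
        ¬closure (dyadicInterval n' k') ⊆ W
    · exact ⟨_, ⟨n, k, rfl, hW, hmax⟩, subset_rfl⟩
    · push Not at hmax
      obtain ⟨n', hn', k', hsub, hW'⟩ := hmax
      obtain ⟨J, hJ, hsubJ⟩ := ih n' hn' k' hW'
      exact ⟨J, hJ, hsub.trans hsubJ⟩

lemma eq_of_mem_maximalDyadicIntervals {I J : Set ℝ} (hI : I ∈ maximalDyadicIntervals W)
    (hJ : J ∈ maximalDyadicIntervals W) {x : ℝ} (hxI : x ∈ I) (hxJ : x ∈ J) : I = J := by
  obtain ⟨n, k, rfl, hWI, hmaxI⟩ := hI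
  obtain ⟨n', k', rfl, hWJ, hmaxJ⟩ := hJ
  wlog hle : n ≤ n' generalizing n k n' k'
  · exact (this n' k' hxJ hWJ hmaxJ n k hxI hWI hmaxI (le_of_not_ge hle)).symm
  obtain hlt | rfl := hle.lt_or_eq
  · exact absurd hWI (hmaxJ n hlt k (dyadicInterval_subset_of_mem hle hxI hxJ))
  · rw [eq_floor_of_mem_dyadicInterval hxI, eq_floor_of_mem_dyadicInterval hxJ]

lemma pairwiseDisjoint_maximalDyadicIntervals :
    (maximalDyadicIntervals W).PairwiseDisjoint id :=
  fun _ hI _ hJ hne => disjoint_left.mpr fun _ hxI hxJ =>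
    hne (eq_of_mem_maximalDyadicIntervals hI hJ hxI hxJ)

lemma mem_sUnion_maximalDyadicIntervals (hW : IsOpen W) {x : ℝ} (hxW : x ∈ W)
    (hx : Irrational x) : x ∈ ⋃₀ maximalDyadicIntervals W := by
  obtain ⟨ε, hε, hball⟩ := Metric.isOpen_iff.mp hW x hxW
  obtain ⟨n, hn⟩ := exists_pow_lt_of_lt_one hε (by norm_num : (1 / 2 : ℝ) < 1)
  rw [div_pow, one_pow] at hn
  have hxI := mem_dyadicInterval_floor hx n
  obtain ⟨J, hJ, hsub⟩ := exists_maximalDyadicInterval_superset _ _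
    ((closure_dyadicInterval_subset_ball hxI hn).trans hball)
  exact ⟨J, hJ, hsub hxI⟩

lemma isOIT_maximalDyadicIntervals {V : ℕ → Set ℝ} (hV : Antitone V) :
    IsOIT fun m => maximalDyadicIntervals (V m) := by
  refine ⟨?_, fun m => pairwiseDisjoint_maximalDyadicIntervals, ?_⟩
  · rintro m I ⟨n, k, rfl, -⟩
    exact ⟨_, _, rfl⟩
  · rintro m I ⟨n, k, rfl, hW, -⟩
    exact exists_maximalDyadicInterval_superset n k (hW.trans (hV m.le_succ))

end

lemma IsOITSmall.exists_isClosed {G : ℕ → Set (Set ℝ)} {V : ℕ → Set ℝ} {Y : Set ℝ}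
    (hY : IsOITSmall G Y) (hGV : ∀ m, ∀ I ∈ G m, closure I ⊆ V m) :
    ∃ C, IsClosed C ∧ Y ∩ ⋂ m, ⋃₀ G m ⊆ C ∧ C ⊆ ⋂ m, V m := by
  obtain ⟨F, hF, hYF⟩ := hY
  refine ⟨⋂ m, ⋃ I ∈ F m, closure I, ?_, ?_, ?_⟩
  · exact isClosed_iInter fun m => (hF m).2.isClosed_biUnion fun _ _ => isClosed_closure
  · rintro x ⟨hxY, hxG⟩
    refine mem_iInter.mpr fun m => ?_
    obtain ⟨I, hI, hxI⟩ := hYF x hxY m (mem_iInter.mp hxG m)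
    exact mem_biUnion hI (subset_closure hxI)
  · exact iInter_mono fun m => iUnion₂_subset fun I hI => hGV m I ((hF m).1 hI)

theorem stmt18 (X : Set ℝ) (hthin : IsThin X)
    (hirr : ∀ q : ℚ, (q : ℝ) ∉ X) :
    ∀ G : Set ℝ, IsGδ G →
      ∃ C : ℕ → Set ℝ, (∀ n, IsClosed (C n)) ∧ X ∩ G = X ∩ ⋃ n, C n := by
  intro G hG
  obtain ⟨U, hU, rfl⟩ := hG.eq_iInter_nat
  have hV : ∀ m, IsOpen (dissipate U m) := fun m =>
    (finite_Iic m).isOpen_biInter fun i _ => hU i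
  obtain ⟨Y, rfl, hY⟩ := hthin _ (isOIT_maximalDyadicIntervals antitone_dissipate)
  choose C hC hYC hCU using fun k =>
    (hY k).exists_isClosed fun m _ => closure_subset_of_mem_maximalDyadicIntervals
  refine ⟨C, hC, subset_antisymm ?_ ?_⟩
  · rintro x ⟨hxX, hxU⟩
    obtain ⟨k, hxY⟩ := mem_iUnion.mp hxX
    refine ⟨hxX, mem_iUnion.mpr ⟨k, hYC k ⟨hxY, mem_iInter.mpr fun m => ?_⟩⟩⟩
    exact mem_sUnion_maximalDyadicIntervals (hV m) (iInter_subset_dissipate m hxU)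
      fun ⟨q, hq⟩ => hirr q (hq ▸ hxX)
  · rintro x ⟨hxX, hxC⟩
    obtain ⟨k, hxC⟩ := mem_iUnion.mp hxC
    exact ⟨hxX, iInter_dissipate (s := U) ▸ hCU k hxC⟩
end

section
/- Given any open set U contained in an open interval I with rational endpoints, there is a family G of pairwise disjoint open intervals with rational endpoints such that cl(J) ⊆ I for every J ∈ G and ⋃G ⊆ U ⊆ ⋃G ∪ ℚ. -/
/-!
Every irrational point `x` of `U` lies in the interior of each of its dyadic cells
`[k / 2ⁿ, (k + 1) / 2ⁿ)`, and these cells shrink to `x`, so from some level on their closures lie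
in `U`. Choose for each such `x` the coarsest such cell. Dyadic cells are nested or disjoint, and a
chosen cell cannot lie strictly inside another chosen one, since the larger cell would then have
been chosen for its points too; so the chosen cells are pairwise disjoint and their interiors
form `G`. Only the rational endpoints of the cells are missed.
-/

open Set

section FloorRing

variable {K : Type*} [Field K] [LinearOrder K] [FloorRing K]

def dyadicCell (n : ℕ) (x : K) : Set K := {y | ⌊y * 2 ^ n⌋ = ⌊x * 2 ^ n⌋}

lemma mem_dyadicCell {n : ℕ} {x y : K} : y ∈ dyadicCell n x ↔ ⌊y * 2 ^ n⌋ = ⌊x * 2 ^ n⌋ :=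
  Iff.rfl

lemma mem_dyadicCell_self (n : ℕ) (x : K) : x ∈ dyadicCell n x := rfl

lemma dyadicCell_eq_of_mem {n : ℕ} {x y : K} (h : y ∈ dyadicCell n x) :
    dyadicCell n y = dyadicCell n x := by
  ext z
  rw [mem_dyadicCell, mem_dyadicCell, mem_dyadicCell.1 h]

lemma floor_mul_two_pow_of_le [IsStrictOrderedRing K] {m n : ℕ} (h : m ≤ n) (x : K) :
    ⌊x * 2 ^ m⌋ = ⌊x * 2 ^ n⌋ / 2 ^ (n - m) := by
  have hx : x * 2 ^ m = x * 2 ^ n / ((2 ^ (n - m) : ℕ) : K) := by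
    rw [Nat.cast_pow, Nat.cast_ofNat, ← pow_sub_mul_pow 2 h]
    field_simp
  rw [hx, Int.floor_div_natCast]
  push_cast
  rfl

lemma dyadicCell_subset_of_le [IsStrictOrderedRing K] {m n : ℕ} (h : m ≤ n) (x : K) :
    dyadicCell n x ⊆ dyadicCell m x := fun y hy => by
  rw [mem_dyadicCell, floor_mul_two_pow_of_le h y, floor_mul_two_pow_of_le h x, mem_dyadicCell.1 hy]

lemma dyadicCell_eq_Ico [IsStrictOrderedRing K] (n : ℕ) (x : K) :
    dyadicCell n x = Ico ((⌊x * 2 ^ n⌋ : K) / 2 ^ n) ((⌊x * 2 ^ n⌋ + 1) / 2 ^ n) := by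
  ext y
  rw [mem_dyadicCell, Int.floor_eq_iff, mem_Ico, div_le_iff₀ (by positivity),
    lt_div_iff₀ (by positivity)]

lemma dyadicCell_eq_or_disjoint_of_isLeast [IsStrictOrderedRing K] {P : Set K → Prop} {m n : ℕ} {x y : K}
    (hx : IsLeast {k | P (dyadicCell k x)} m) (hy : IsLeast {k | P (dyadicCell k y)} n) :
    dyadicCell m x = dyadicCell n y ∨ Disjoint (dyadicCell m x) (dyadicCell n y) := by
  wlog hmn : m ≤ n generalizing m n x y
  · exact (this hy hx (le_of_not_ge hmn)).imp Eq.symm fun h => h.symm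
  rw [or_iff_not_imp_right, not_disjoint_iff]
  rintro ⟨z, hzx, hzy⟩
  have hyx : y ∈ dyadicCell m x := by
    rw [← dyadicCell_eq_of_mem hzx]
    exact dyadicCell_subset_of_le hmn z (dyadicCell_eq_of_mem hzy ▸ mem_dyadicCell_self n y)
  have hcell := dyadicCell_eq_of_mem hyx
  obtain rfl : m = n := le_antisymm hmn (hy.2 (show P (dyadicCell m y) from hcell ▸ hx.1))
  exact hcell.symm

end FloorRing

lemma exists_rat_interior_dyadicCell_eq_Ioo (n : ℕ) (x : ℝ) :
    ∃ p q : ℚ, (p : ℝ) < q ∧ interior (dyadicCell n x) = Ioo (p : ℝ) q := by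
  refine ⟨(⌊x * 2 ^ n⌋ : ℚ) / 2 ^ n, (⌊x * 2 ^ n⌋ + 1) / 2 ^ n, ?_, ?_⟩
  · push_cast
    exact div_lt_div_of_pos_right (lt_add_one _) (by positivity)
  · rw [dyadicCell_eq_Ico, interior_Ico]
    push_cast
    rfl

lemma closure_dyadicCell (n : ℕ) (x : ℝ) :
    closure (dyadicCell n x) = Icc ((⌊x * 2 ^ n⌋ : ℝ) / 2 ^ n) ((⌊x * 2 ^ n⌋ + 1) / 2 ^ n) := by
  rw [dyadicCell_eq_Ico, closure_Ico (div_lt_div_of_pos_right (lt_add_one _) (by positivity)).ne]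

lemma Irrational.mem_interior_dyadicCell {x : ℝ} (hx : Irrational x) (n : ℕ) :
    x ∈ interior (dyadicCell n x) := by
  have hmem := mem_dyadicCell_self n x
  rw [dyadicCell_eq_Ico] at hmem
  rw [dyadicCell_eq_Ico, interior_Ico]
  refine ⟨hmem.1.lt_of_ne ?_, hmem.2⟩
  simpa using (hx.ne_rat ((⌊x * 2 ^ n⌋ : ℚ) / 2 ^ n)).symm

lemma exists_closure_dyadicCell_subset {U : Set ℝ} (hU : IsOpen U) {x : ℝ} (hx : x ∈ U) :
    ∃ n, closure (dyadicCell n x) ⊆ U := by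
  obtain ⟨ε, hε, hball⟩ := Metric.isOpen_iff.1 hU x hx
  obtain ⟨n, hn⟩ := exists_pow_lt_of_lt_one hε one_half_lt_one
  refine ⟨n, fun y hy => hball ?_⟩
  have hxcl := subset_closure (mem_dyadicCell_self n x)
  rw [closure_dyadicCell] at hy hxcl
  calc dist y x ≤ (⌊x * 2 ^ n⌋ + 1) / 2 ^ n - ⌊x * 2 ^ n⌋ / 2 ^ n := Real.dist_le_of_mem_Icc hy hxcl
    _ = (1 / 2) ^ n := by rw [one_div_pow]; ring
    _ < ε := hn

theorem stmt19_general (a b : ℚ) (U : Set ℝ)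
    (hU : IsOpen U) (hUI : U ⊆ Set.Ioo (a : ℝ) (b : ℝ)) :
    ∃ G : Set (Set ℝ),
      (∀ J ∈ G, ∃ p q : ℚ, (p : ℝ) < (q : ℝ) ∧ J = Set.Ioo (p : ℝ) (q : ℝ)) ∧
      G.PairwiseDisjoint id ∧
      (∀ J ∈ G, closure J ⊆ Set.Ioo (a : ℝ) (b : ℝ)) ∧
      ⋃₀ G ⊆ U ∧
      U ⊆ ⋃₀ G ∪ Set.range ((↑) : ℚ → ℝ) := by
  set G : Set (Set ℝ) := {J | ∃ x n, IsLeast {k | closure (dyadicCell k x) ⊆ U} n ∧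
    J = interior (dyadicCell n x)}
  refine ⟨G, ?_, ?_, ?_, ?_, ?_⟩
  · rintro J ⟨x, n, -, rfl⟩
    exact exists_rat_interior_dyadicCell_eq_Ioo n x
  · rintro _ ⟨x, m, hm, rfl⟩ _ ⟨y, n, hn, rfl⟩ hne
    have hdisj := (dyadicCell_eq_or_disjoint_of_isLeast (P := fun s => closure s ⊆ U) hm hn).resolve_left
      fun h => hne (by rw [h])
    exact hdisj.mono interior_subset interior_subset
  · rintro J ⟨x, n, hn, rfl⟩
    exact (closure_mono interior_subset).trans (hn.1.trans hUI)
  · rintro y ⟨J, ⟨x, n, hn, rfl⟩, hy⟩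
    exact hn.1 (subset_closure (interior_subset hy))
  · intro x hx
    by_cases hxq : x ∈ range ((↑) : ℚ → ℝ)
    · exact Or.inr hxq
    classical
    have hex := exists_closure_dyadicCell_subset hU hx
    refine Or.inl ⟨_, ⟨x, Nat.find hex, ⟨Nat.find_spec hex, fun k hk => Nat.find_min' hex hk⟩, rfl⟩,
      Irrational.mem_interior_dyadicCell hxq _⟩

theorem stmt19 (a b : ℚ) (hab : (a : ℝ) < (b : ℝ)) (U : Set ℝ)
    (hU : IsOpen U) (hUI : U ⊆ Set.Ioo (a : ℝ) (b : ℝ)) :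
    ∃ G : Set (Set ℝ),
      (∀ J ∈ G, ∃ p q : ℚ, (p : ℝ) < (q : ℝ) ∧ J = Set.Ioo (p : ℝ) (q : ℝ)) ∧
      G.PairwiseDisjoint id ∧
      (∀ J ∈ G, closure J ⊆ Set.Ioo (a : ℝ) (b : ℝ)) ∧
      ⋃₀ G ⊆ U ∧
      U ⊆ ⋃₀ G ∪ Set.range ((↑) : ℚ → ℝ) :=
  stmt19_general a b U hU hUI
end
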